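/- arXiv:2411.15107 — 4 statements merged into one kernel-verified Lean document; each statement's English description precedes it below -/
import Mathlib

section
/- Let P be a standard Banach space property. If P is compactly determined for Lipschitz-free spaces, then P is locally determined for Lipschitz-free spaces. Moreover, if M is a locally compact complete pointed metric space, then P is compactly determined for F(M) if and only if P is locally determined for F(M). -/
open Filter Topology Metric Set

noncomputable section

/-- A formal series `∑ yₙ` in a normed space `Y` is weakly unconditionally Cauchy (WUC)
if `∑ |⟨φ, yₙ⟩| < ∞` for every continuous linear functional `φ` on `Y`. -/
def IsWUC {Y : Type*} [SeminormedAddCommGroup Y] [NormedSpace ℝ Y] (y : ℕ → Y) : Prop :=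
  ∀ φ : Y →L[ℝ] ℝ, Summable fun n => |φ (y n)|

/-- `Γ` is a (V*)-set in `X`: for every WUC series `∑ fₙ` in the dual `X*`,
`sup_{x ∈ Γ} |⟨x, fₙ⟩| → 0`. -/
def IsVStarSet {X : Type*} [SeminormedAddCommGroup X] [NormedSpace ℝ X] (Γ : Set X) : Prop :=
  ∀ f : ℕ → (X →L[ℝ] ℝ), IsWUC f →
    ∀ ε > (0 : ℝ), ∀ᶠ n in atTop, ∀ x ∈ Γ, |f n x| ≤ ε

/-- `Γ` is relatively weakly compact: its closure in the weak topology is compact. -/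
def RelWeaklyCompact {X : Type*} [SeminormedAddCommGroup X] [NormedSpace ℝ X]
    (Γ : Set X) : Prop :=
  IsCompact (closure ((toWeakSpace ℝ X) '' Γ))

/-- A normed space has Pełczyński's property (V*) if every (V*)-set is relatively
weakly compact. -/
def HasPropertyVStar (X : Type*) [SeminormedAddCommGroup X] [NormedSpace ℝ X] : Prop :=
  ∀ Γ : Set X, IsVStarSet Γ → RelWeaklyCompact Γ

/-- `F`, together with the map `δ : M → F`, is (a realization of) the Lipschitz-free space
over the pointed metric space `(M, o)`: `δ` is a base-point-preserving isometric embedding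
whose range has dense linear span, and every Lipschitz function `f : M → ℝ` vanishing at
the base point lifts to a continuous linear functional of norm at most `Lip(f)` (this
characterizes `F(M)`, with dual `Lip₀(M)`, up to isometric isomorphism). -/
structure IsLipschitzFree {M : Type*} [MetricSpace M] (o : M)
    {F : Type*} [NormedAddCommGroup F] [NormedSpace ℝ F] (δ : M → F) : Prop where
  isometry : Isometry δ
  map_base : δ o = 0
  dense_span : Dense (Submodule.span ℝ (Set.range δ) : Set F)
  lift : ∀ (L : NNReal) (f : M → ℝ), LipschitzWith L f → f o = 0 →
    ∃ φ : F →L[ℝ] ℝ, ‖φ‖ ≤ L ∧ ∀ x, φ (δ x) = f x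

/-- The subspace of `F` corresponding to the Lipschitz-free space `F(S)` over a subset
`S ⊆ M`: the closed linear span of `δ(S)`. -/
def freeSpan {M : Type*} [MetricSpace M] {F : Type*} [NormedAddCommGroup F]
    [NormedSpace ℝ F] (δ : M → F) (S : Set M) : Submodule ℝ F :=
  (Submodule.span ℝ (δ '' S)).topologicalClosure

theorem mem_freeSpan {M : Type*} [MetricSpace M] {F : Type*} [NormedAddCommGroup F]
    [NormedSpace ℝ F] (δ : M → F) {S : Set M} {x : M} (hx : x ∈ S) :
    δ x ∈ freeSpan δ S :=
  (Submodule.span ℝ (δ '' S)).le_topologicalClosure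
    (Submodule.subset_span ⟨x, hx, rfl⟩)

universe v

/-- A Banach space property is standard if it is stable under isomorphism, finite
direct sums, and passing to closed subspaces. -/
def StandardProperty
    (P : ∀ (X : Type v) [NormedAddCommGroup X] [NormedSpace ℝ X], Prop) : Prop :=
  (∀ (X Y : Type v) [NormedAddCommGroup X] [NormedSpace ℝ X]
      [NormedAddCommGroup Y] [NormedSpace ℝ Y], (X ≃L[ℝ] Y) → P X → P Y) ∧
  (∀ (X Y : Type v) [NormedAddCommGroup X] [NormedSpace ℝ X]
      [NormedAddCommGroup Y] [NormedSpace ℝ Y], P X → P Y → P (X × Y)) ∧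
  (∀ (X : Type v) [NormedAddCommGroup X] [NormedSpace ℝ X] (S : Submodule ℝ X),
      IsClosed (S : Set X) → P X → P ↥S)

/-- `P` is compactly determined for the Lipschitz-free space `F(M)` (realized as `F`
via `δ`): `F(M)` satisfies `P` whenever `F(K ∪ {0})` satisfies `P` for all compact
`K ⊆ M`. -/
def CompactlyDetermined
    (P : ∀ (X : Type v) [NormedAddCommGroup X] [NormedSpace ℝ X], Prop)
    {M : Type*} [MetricSpace M] (o : M)
    {F : Type v} [NormedAddCommGroup F] [NormedSpace ℝ F] (δ : M → F) : Prop :=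
  (∀ K : Set M, IsCompact K → P ↥(freeSpan δ (K ∪ {o}))) → P F

/-- `P` is locally determined for the Lipschitz-free space `F(M)` (realized as `F` via
`δ`): `F(M)` satisfies `P` whenever every point of `M` has a neighborhood `U` such that
`F(cl(U) ∪ {0})` satisfies `P`. -/
def LocallyDetermined
    (P : ∀ (X : Type v) [NormedAddCommGroup X] [NormedSpace ℝ X], Prop)
    {M : Type*} [MetricSpace M] (o : M)
    {F : Type v} [NormedAddCommGroup F] [NormedSpace ℝ F] (δ : M → F) : Prop :=
  (∀ x : M, ∃ U ∈ 𝓝 x, P ↥(freeSpan δ (closure U ∪ {o}))) → P F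


/-!
A compact `K ⊆ M` is covered by finitely many open sets `U` with `P (F(cl U ∪ {0}))`, so it
suffices to pass from open sets `V`, `W` to `V ∪ W`. A Lipschitz cutoff `w` with bounded support,
equal to `1` near `K \ V` and to `0` near `K \ W`, linearizes to the weighting operator
`T : δ x ↦ w x • δ x` on `F(M)`, and `μ ↦ (μ - Tμ, Tμ)` embeds `F(K ∪ {0})` isomorphically onto a
closed subspace of `F(S₁ ∪ {0}) × F(S₂ ∪ {0})` for compact `S₁ ⊆ V` and `S₂ ⊆ W`.
Conversely, in a locally compact space compact neighbourhoods are local witnesses.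
-/

open scoped NNReal

theorem LipschitzWith.smul_of_norm_le_on_support {α E : Type*} [PseudoMetricSpace α]
    [SeminormedAddCommGroup E] [NormedSpace ℝ E] {w : α → ℝ} {f : α → E} {Kw Kf B R : ℝ≥0}
    (hw : LipschitzWith Kw w) (hf : LipschitzWith Kf f) (hwB : ∀ x, |w x| ≤ B)
    (hfR : ∀ x, w x ≠ 0 → ‖f x‖ ≤ R) :
    LipschitzWith (Kw * R + B * Kf) fun x => w x • f x := by
  have key : ∀ a b, w a ≠ 0 → dist (w a • f a) (w b • f b) ≤ (Kw * R + B * Kf) * dist a b := by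
    intro a b ha
    have hwab : |w a - w b| ≤ Kw * dist a b := by simpa [Real.dist_eq] using hw.dist_le_mul a b
    calc dist (w a • f a) (w b • f b) = ‖(w a - w b) • f a + w b • (f a - f b)‖ := by
          rw [dist_eq_norm, sub_smul, smul_sub]; abel_nf
      _ ≤ |w a - w b| * ‖f a‖ + |w b| * dist (f a) (f b) := by
          grw [norm_add_le, norm_smul, norm_smul, dist_eq_norm, Real.norm_eq_abs, Real.norm_eq_abs]
      _ ≤ Kw * dist a b * R + B * (Kf * dist a b) := by
          gcongr
          exacts [hfR a ha, hwB b, hf.dist_le_mul a b]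
      _ = (Kw * R + B * Kf) * dist a b := by ring
  refine LipschitzWith.of_dist_le_mul fun a b => ?_
  by_cases ha : w a = 0
  · by_cases hb : w b = 0
    · rw [ha, hb, zero_smul, zero_smul, dist_self]; positivity
    · rw [dist_comm, dist_comm a]; exact key b a hb
  · exact key a b ha

namespace IsLipschitzFree

variable {M : Type*} [MetricSpace M] {o : M} {F : Type*} [NormedAddCommGroup F]
  [NormedSpace ℝ F] {δ : M → F}

theorem norm_apply (hδ : IsLipschitzFree o δ) (x : M) : ‖δ x‖ = dist x o := by
  rw [← hδ.isometry.dist_eq, hδ.map_base, dist_zero_right]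

theorem norm_linearCombination_le (hδ : IsLipschitzFree o δ) {E : Type*} [NormedAddCommGroup E]
    [NormedSpace ℝ E] {f : M → E} {C : ℝ≥0} (hf : LipschitzWith C f) (hfo : f o = 0)
    (c : M →₀ ℝ) :
    ‖Finsupp.linearCombination ℝ f c‖ ≤ C * ‖Finsupp.linearCombination ℝ δ c‖ := by
  refine NormedSpace.norm_le_dual_bound ℝ _ (by positivity) fun φ => ?_
  obtain ⟨ψ, hψ, hψδ⟩ := hδ.lift (‖φ‖₊ * C) (φ ∘ f) (φ.lipschitz.comp hf) (by simp [hfo])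
  have hφψ : φ (Finsupp.linearCombination ℝ f c) = ψ (Finsupp.linearCombination ℝ δ c) := by
    simp [Finsupp.linearCombination_apply, map_finsuppSum, hψδ]
  rw [hφψ]
  calc ‖ψ (Finsupp.linearCombination ℝ δ c)‖ ≤ ‖ψ‖ * ‖Finsupp.linearCombination ℝ δ c‖ :=
        ψ.le_opNorm _
    _ ≤ ‖φ‖ * C * ‖Finsupp.linearCombination ℝ δ c‖ := by gcongr; exact_mod_cast hψ
    _ = C * ‖Finsupp.linearCombination ℝ δ c‖ * ‖φ‖ := by ring

theorem exists_linearization (hδ : IsLipschitzFree o δ) {E : Type*} [NormedAddCommGroup E]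
    [NormedSpace ℝ E] [CompleteSpace E] {f : M → E} {C : ℝ≥0} (hf : LipschitzWith C f)
    (hfo : f o = 0) : ∃ T : F →L[ℝ] E, ∀ x, T (δ x) = f x := by
  have hdense : DenseRange (Finsupp.linearCombination ℝ δ) := by
    rw [DenseRange, ← LinearMap.coe_range, Finsupp.range_linearCombination]
    exact hδ.dense_span
  have hbound := hδ.norm_linearCombination_le hf hfo
  refine ⟨(Finsupp.linearCombination ℝ f).extendOfNorm (Finsupp.linearCombination ℝ δ),
    fun x => ?_⟩
  simpa using LinearMap.extendOfNorm_eq hdense ⟨C, hbound⟩ (Finsupp.single x 1)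

theorem exists_weighting (hδ : IsLipschitzFree o δ) [CompleteSpace F] {w : M → ℝ} {L B : ℝ≥0}
    (hw : LipschitzWith L w) (hwB : ∀ x, |w x| ≤ B) (hsupp : Bornology.IsBounded w.support) :
    ∃ T : F →L[ℝ] F, ∀ x, T (δ x) = w x • δ x := by
  obtain ⟨R, hR⟩ := hsupp.subset_closedBall o
  have hδR : ∀ x, w x ≠ 0 → ‖δ x‖ ≤ R.toNNReal := fun x hx => by
    simpa [hδ.norm_apply] using (hR hx).trans (le_max_left R 0)
  exact hδ.exists_linearization
    (hw.smul_of_norm_le_on_support hδ.isometry.lipschitz hwB hδR) (by simp [hδ.map_base])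

end IsLipschitzFree

namespace StandardProperty

variable {P : ∀ (X : Type v) [NormedAddCommGroup X] [NormedSpace ℝ X], Prop}

theorem of_antilipschitz (hP : StandardProperty P) {X Y : Type v} [NormedAddCommGroup X]
    [NormedSpace ℝ X] [CompleteSpace X] [NormedAddCommGroup Y] [NormedSpace ℝ Y]
    (J : X →L[ℝ] Y) {K : ℝ≥0} (hJ : AntilipschitzWith K J) (hY : P Y) : P X := by
  have hclosed : IsClosed (LinearMap.range (J : X →ₗ[ℝ] Y) : Set Y) := by
    rw [LinearMap.coe_range, ContinuousLinearMap.coe_coe]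
    exact hJ.isClosed_range J.uniformContinuous
  let e := LinearEquiv.ofInjective (J : X →ₗ[ℝ] Y) hJ.injective
  have he : ∀ y, ‖e.symm y‖ ≤ K * ‖y‖ := fun y => by
    have := J.bound_of_antilipschitz hJ (e.symm y)
    rwa [← ContinuousLinearMap.coe_coe J, LinearEquiv.ofInjective_symm_apply] at this
  exact hP.1 _ _ (e.toContinuousLinearEquivOfBounds ‖J‖ K J.le_opNorm he).symm
    (hP.2.2 _ _ hclosed hY)

theorem of_le (hP : StandardProperty P) {X : Type v} [NormedAddCommGroup X] [NormedSpace ℝ X]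
    {W₁ W₂ : Submodule ℝ X} [CompleteSpace W₁] (hle : W₁ ≤ W₂) (h : P W₂) : P W₁ :=
  hP.of_antilipschitz (W₁.subtypeL.codRestrict W₂ fun x => hle x.2)
    (AddMonoidHomClass.antilipschitz_of_bound (K := 1) _ fun x => by simp) h

theorem of_decomposition (hP : StandardProperty P) {G : Type v} [NormedAddCommGroup G]
    [NormedSpace ℝ G] {X Y₁ Y₂ : Submodule ℝ G} [CompleteSpace X] (T : G →L[ℝ] G)
    (h₁ : ∀ μ ∈ X, μ - T μ ∈ Y₁) (h₂ : ∀ μ ∈ X, T μ ∈ Y₂) (hY₁ : P Y₁) (hY₂ : P Y₂) : P X := by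
  let J : X →L[ℝ] Y₁ × Y₂ :=
    (((ContinuousLinearMap.id ℝ G - T) ∘L X.subtypeL).codRestrict Y₁ fun μ => h₁ μ μ.2).prod
      ((T ∘L X.subtypeL).codRestrict Y₂ fun μ => h₂ μ μ.2)
  have hJ : AntilipschitzWith 2 J := by
    refine AddMonoidHomClass.antilipschitz_of_bound J fun μ => ?_
    calc ‖μ‖ = ‖((μ : G) - T μ) + T μ‖ := by rw [sub_add_cancel]; rfl
      _ ≤ ‖(J μ).1‖ + ‖(J μ).2‖ := norm_add_le _ _
      _ ≤ 2 * ‖J μ‖ := by linarith [norm_fst_le (J μ), norm_snd_le (J μ)]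
  exact hP.of_antilipschitz J hJ (hP.2.1 _ _ hY₁ hY₂)

end StandardProperty

section FreeSpan

variable {M : Type*} [MetricSpace M] {F : Type*} [NormedAddCommGroup F] [NormedSpace ℝ F]
  {δ : M → F}

theorem freeSpan_mono {S T : Set M} (h : S ⊆ T) : freeSpan δ S ≤ freeSpan δ T :=
  Submodule.topologicalClosure_mono (Submodule.span_mono (Set.image_mono h))

theorem isClosed_freeSpan (S : Set M) : IsClosed (freeSpan δ S : Set F) :=
  Submodule.isClosed_topologicalClosure _

instance [CompleteSpace F] (S : Set M) : CompleteSpace (freeSpan δ S) :=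
  (isClosed_freeSpan S).completeSpace_coe

theorem freeSpan_le_comap {E : Type*} [NormedAddCommGroup E] [NormedSpace ℝ E] {S : Set M}
    (T : F →L[ℝ] E) {Y : Submodule ℝ E} (hY : IsClosed (Y : Set E))
    (h : ∀ x ∈ S, T (δ x) ∈ Y) : freeSpan δ S ≤ Y.comap (T : F →ₗ[ℝ] E) :=
  Submodule.topologicalClosure_minimal _
    (Submodule.span_le.2 <| Set.image_subset_iff.2 h) (hY.preimage T.continuous)

theorem smul_mem_freeSpan {S : Set M} {x : M} {c : ℝ} (h : c ≠ 0 → x ∈ S) :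
    c • δ x ∈ freeSpan δ S := by
  by_cases hc : c = 0
  · simp [hc]
  · exact Submodule.smul_mem _ c (mem_freeSpan δ (h hc))

end FreeSpan

theorem StandardProperty.freeSpan_of_partition
    {P : ∀ (X : Type v) [NormedAddCommGroup X] [NormedSpace ℝ X], Prop} (hP : StandardProperty P)
    {M : Type*} [MetricSpace M] {o : M} {F : Type v} [NormedAddCommGroup F] [NormedSpace ℝ F]
    [CompleteSpace F] {δ : M → F} (hδ : IsLipschitzFree o δ) {K S₁ S₂ : Set M} {w : M → ℝ}
    {L B : ℝ≥0} (hw : LipschitzWith L w) (hwB : ∀ x, |w x| ≤ B)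
    (hsupp : Bornology.IsBounded w.support) (h₁ : ∀ x ∈ K, w x ≠ 1 → x ∈ S₁)
    (h₂ : ∀ x ∈ K, w x ≠ 0 → x ∈ S₂) (hS₁ : P (freeSpan δ (S₁ ∪ {o})))
    (hS₂ : P (freeSpan δ (S₂ ∪ {o}))) : P (freeSpan δ (K ∪ {o})) := by
  obtain ⟨T, hT⟩ := hδ.exists_weighting hw hwB hsupp
  refine hP.of_decomposition T (fun μ hμ => ?_) (fun μ hμ => ?_) hS₁ hS₂
  · refine freeSpan_le_comap (ContinuousLinearMap.id ℝ F - T) (isClosed_freeSpan _)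
      (fun x hx => ?_) hμ
    have hcoef : (ContinuousLinearMap.id ℝ F - T) (δ x) = (1 - w x) • δ x := by
      simp [hT, sub_smul]
    rw [hcoef]
    exact smul_mem_freeSpan fun hc =>
      hx.imp (fun hxK => h₁ x hxK fun h1 => hc (by rw [h1, sub_self])) id
  · refine freeSpan_le_comap T (isClosed_freeSpan _) (fun x hx => ?_) hμ
    rw [hT]
    exact smul_mem_freeSpan fun hc => hx.imp (fun hxK => h₂ x hxK hc) id

section Cutoff

variable {M : Type*} [MetricSpace M]

theorem IsCompact.exists_pos_le_infDist {K₁ K₂ : Set M} (hK₁ : IsCompact K₁) (hK₂ : IsClosed K₂)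
    (hne : K₂.Nonempty) (hdisj : Disjoint K₁ K₂) : ∃ r > 0, ∀ x ∈ K₁, r ≤ infDist x K₂ := by
  obtain ⟨r, hr, hlt⟩ := exists_pos_forall_lt_edist hK₁ hK₂ hdisj
  refine ⟨r, hr, fun x hx => (le_infDist hne).2 fun y hy => ?_⟩
  have := hlt x hx y hy
  rw [edist_dist, ← ENNReal.ofReal_coe_nnreal] at this
  exact ((ENNReal.ofReal_lt_ofReal_iff_of_nonneg r.2).1 this).le

def plateau (A : Set M) (ε : ℝ) (x : M) : ℝ :=
  min 1 (max 0 (2 - infDist x A / ε))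

variable {A : Set M} {ε : ℝ}

theorem lipschitzWith_plateau : LipschitzWith ‖ε⁻¹‖₊ (plateau A ε) := by
  have h := (LipschitzWith.const (2 : ℝ)).sub
    ((lipschitzWith_smul ε⁻¹).comp (lipschitz_infDist_pt A))
  simp only [zero_add, mul_one] at h
  unfold plateau
  simpa [div_eq_inv_mul] using (h.const_max 0).const_min 1

theorem abs_plateau_le_one (x : M) : |plateau A ε x| ≤ 1 :=
  abs_le.2 ⟨(neg_nonpos.2 zero_le_one).trans (le_min zero_le_one (le_max_left _ _)),
    min_le_left _ _⟩

theorem infDist_lt_of_plateau_ne_zero (hε : 0 < ε) {x : M} (h : plateau A ε x ≠ 0) :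
    infDist x A < 2 * ε := by
  contrapose! h
  have : 2 - infDist x A / ε ≤ 0 := by rw [sub_nonpos, le_div_iff₀ hε]; exact h
  simp [plateau, this]

theorem lt_infDist_of_plateau_ne_one (hε : 0 < ε) {x : M} (h : plateau A ε x ≠ 1) :
    ε < infDist x A := by
  contrapose! h
  have : 1 ≤ 2 - infDist x A / ε := by rw [le_sub_comm, div_le_iff₀ hε]; linarith
  simp [plateau, this]

theorem isBounded_support_plateau (hε : 0 < ε) (hA : Bornology.IsBounded A) (hne : A.Nonempty) :
    Bornology.IsBounded (plateau A ε).support :=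
  (hA.thickening (δ := 2 * ε)).subset fun _ hx =>
    (mem_thickening_iff_infDist_lt hne).2 (infDist_lt_of_plateau_ne_zero hε hx)

end Cutoff

def HoldsCompactlyIn (P : ∀ (X : Type v) [NormedAddCommGroup X] [NormedSpace ℝ X], Prop)
    {M : Type*} [MetricSpace M] (o : M) {F : Type v} [NormedAddCommGroup F] [NormedSpace ℝ F]
    (δ : M → F) (V : Set M) : Prop :=
  ∀ K : Set M, IsCompact K → K ⊆ V → P (freeSpan δ (K ∪ {o}))

namespace HoldsCompactlyIn

variable {P : ∀ (X : Type v) [NormedAddCommGroup X] [NormedSpace ℝ X], Prop}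
  {M : Type*} [MetricSpace M] {o : M} {F : Type v} [NormedAddCommGroup F] [NormedSpace ℝ F]
  {δ : M → F} {V W : Set M}

theorem mono (h : HoldsCompactlyIn P o δ W) (hVW : V ⊆ W) : HoldsCompactlyIn P o δ V :=
  fun K hK hKV => h K hK (hKV.trans hVW)

theorem of_freeSpan [CompleteSpace F] (hP : StandardProperty P) (h : P (freeSpan δ (V ∪ {o}))) :
    HoldsCompactlyIn P o δ V :=
  fun _ _ hKV => hP.of_le (freeSpan_mono (Set.union_subset_union_left _ hKV)) h

theorem union [CompleteSpace F] (hP : StandardProperty P) (hδ : IsLipschitzFree o δ)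
    (hV : IsOpen V) (hW : IsOpen W) (hPV : HoldsCompactlyIn P o δ V)
    (hPW : HoldsCompactlyIn P o δ W) : HoldsCompactlyIn P o δ (V ∪ W) := by
  intro K hK hKVW
  set A := K \ V
  rcases A.eq_empty_or_nonempty with hA | hA
  · exact hPV K hK (Set.sdiff_eq_empty.1 hA)
  obtain ⟨r, hr, hrA⟩ := (hK.diff hW).exists_pos_le_infDist (hK.diff hV).isClosed hA
    (Set.disjoint_left.2 fun x ⟨hxK, hxW⟩ ⟨_, hxV⟩ => (hKVW hxK).elim hxV hxW)
  have hε : 0 < r / 3 := by positivity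
  refine hP.freeSpan_of_partition hδ lipschitzWith_plateau (B := 1)
    (by simpa using abs_plateau_le_one)
    (isBounded_support_plateau hε (hK.diff hV).isBounded hA)
    (S₁ := K ∩ {x | r / 3 ≤ infDist x A}) (S₂ := K ∩ {x | infDist x A ≤ 2 * (r / 3)})
    (fun x hxK hx => ⟨hxK, (lt_infDist_of_plateau_ne_one hε hx).le⟩)
    (fun x hxK hx => ⟨hxK, (infDist_lt_of_plateau_ne_zero hε hx).le⟩) ?_ ?_
  · refine hPV _ (hK.inter_right (isClosed_le continuous_const (continuous_infDist_pt A)))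
      fun x ⟨hxK, hx⟩ => by_contra fun hxV => ?_
    have : infDist x A = 0 := infDist_zero_of_mem ⟨hxK, hxV⟩
    exact (hx.trans_eq this).not_gt hε
  · refine hPW _ (hK.inter_right (isClosed_le (continuous_infDist_pt A) continuous_const))
      fun x ⟨hxK, hx⟩ => by_contra fun hxW => ?_
    have := hrA x ⟨hxK, hxW⟩
    change infDist x A ≤ 2 * (r / 3) at hx
    linarith

theorem biUnion [CompleteSpace F] (hP : StandardProperty P) (hδ : IsLipschitzFree o δ)
    {ι : Type*} (s : Finset ι) {U : ι → Set M} (hU : ∀ i, IsOpen (U i))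
    (h₀ : HoldsCompactlyIn P o δ ∅) (h : ∀ i ∈ s, HoldsCompactlyIn P o δ (U i)) :
    HoldsCompactlyIn P o δ (⋃ i ∈ s, U i) := by
  classical
  induction s using Finset.induction_on with
  | empty => simpa using h₀
  | insert i s _ ih =>
    rw [Finset.set_biUnion_insert]
    exact (h i (s.mem_insert_self i)).union hP hδ (hU i) (isOpen_biUnion fun j _ => hU j)
      (ih fun j hj => h j (Finset.mem_insert_of_mem hj))

end HoldsCompactlyIn

theorem StandardProperty.freeSpan_of_locally
    {P : ∀ (X : Type v) [NormedAddCommGroup X] [NormedSpace ℝ X], Prop} (hP : StandardProperty P)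
    {M : Type*} [MetricSpace M] {o : M} {F : Type v} [NormedAddCommGroup F] [NormedSpace ℝ F]
    [CompleteSpace F] {δ : M → F} (hδ : IsLipschitzFree o δ)
    (h : ∀ x : M, ∃ U ∈ 𝓝 x, P (freeSpan δ (closure U ∪ {o}))) {K : Set M} (hK : IsCompact K) :
    P (freeSpan δ (K ∪ {o})) := by
  choose U hU hPU using h
  have hloc : ∀ x, HoldsCompactlyIn P o δ (interior (U x)) := fun x =>
    (HoldsCompactlyIn.of_freeSpan hP (hPU x)).mono (interior_subset.trans subset_closure)
  obtain ⟨t, -, hKt⟩ := hK.elim_nhds_subcover (fun x => interior (U x))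
    fun x _ => interior_mem_nhds.2 (hU x)
  exact HoldsCompactlyIn.biUnion hP hδ t (fun _ => isOpen_interior)
    ((hloc o).mono (Set.empty_subset _)) (fun x _ => hloc x) K hK hKt

theorem compactlyDetermined_iff_locallyDetermined_general
    (P : ∀ (X : Type v) [NormedAddCommGroup X] [NormedSpace ℝ X], Prop)
    (hP : StandardProperty P)
    {M : Type*} [MetricSpace M] (o : M)
    {F : Type v} [NormedAddCommGroup F] [NormedSpace ℝ F] [CompleteSpace F]
    (δ : M → F) (hδ : IsLipschitzFree o δ) :
    (CompactlyDetermined P o δ → LocallyDetermined P o δ) ∧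
      (LocallyCompactSpace M →
        (CompactlyDetermined P o δ ↔ LocallyDetermined P o δ)) := by
  have compact_to_local : CompactlyDetermined P o δ → LocallyDetermined P o δ :=
    fun hCD hloc => hCD fun _ hK => hP.freeSpan_of_locally hδ hloc hK
  refine ⟨compact_to_local, fun _ => ⟨compact_to_local, fun hLD hcpt => hLD fun x => ?_⟩⟩
  obtain ⟨C, hC, hxC⟩ := exists_compact_mem_nhds x
  exact ⟨C, hxC, hcpt _ hC.closure⟩

/-- Let `P` be a standard Banach space property.  If `P` is compactly determined for a
Lipschitz-free space, then it is locally determined for it; moreover, if `M` is locally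
compact, then `P` is compactly determined for `F(M)` if and only if it is locally
determined for `F(M)`. -/
theorem compactlyDetermined_iff_locallyDetermined
    (P : ∀ (X : Type v) [NormedAddCommGroup X] [NormedSpace ℝ X], Prop)
    (hP : StandardProperty P)
    {M : Type*} [MetricSpace M] [CompleteSpace M] (o : M)
    {F : Type v} [NormedAddCommGroup F] [NormedSpace ℝ F] [CompleteSpace F]
    (δ : M → F) (hδ : IsLipschitzFree o δ) :
    (CompactlyDetermined P o δ → LocallyDetermined P o δ) ∧
      (LocallyCompactSpace M →
        (CompactlyDetermined P o δ ↔ LocallyDetermined P o δ)) :=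
  compactlyDetermined_iff_locallyDetermined_general P hP o δ hδ
end
end

section
/- Let M be a complete pointed metric space and K ⊂ M a compact subset containing 0. The following are equivalent: (i) for every WUC series Σ_n f_n in Lip_0(K) there exists a WUC series Σ_n g_n in Lip_0(M) with g_n restricted to K equal to f_n for every n; (ii) every Lipschitz mapping φ : K → ℓ₁ with φ(0)=0 extends to a Lipschitz mapping Φ : M → ℓ₁ with Φ restricted to K equal to φ. -/
open Filter Topology Metric Set

noncomputable section

open scoped ENNReal

/-- The Banach space `ℓ₁` of absolutely summable real sequences. -/
abbrev ellOne : Type := lp (fun _ : ℕ => ℝ) 1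

/-- WUC from uniformly bounded signed partial sums. -/
lemma isWUC_of_sign_sums {X : Type*} [NormedAddCommGroup X] [NormedSpace ℝ X]
    (g : ℕ → X →L[ℝ] ℝ) (C : ℝ)
    (h : ∀ (s : Finset ℕ) (ε : ℕ → ℝ), (∀ n, ε n = 1 ∨ ε n = -1) →
      ‖∑ n ∈ s, ε n • g n‖ ≤ C) : IsWUC g := by
  intro φ
  refine summable_of_sum_le (c := ‖φ‖ * C) (fun n => abs_nonneg _) fun u => ?_
  set ε : ℕ → ℝ := fun n => if 0 ≤ φ (g n) then 1 else -1 with hε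
  have hεpm : ∀ n, ε n = 1 ∨ ε n = -1 := by
    intro n; by_cases h' : 0 ≤ φ (g n) <;> simp [hε, h']
  have key : ∑ n ∈ u, |φ (g n)| = φ (∑ n ∈ u, ε n • g n) := by
    rw [map_sum]
    refine (Finset.sum_congr rfl fun n _ => ?_)
    rw [map_smul, smul_eq_mul]
    simp only [hε]
    split_ifs with h'
    · rw [abs_of_nonneg h', one_mul]
    · rw [abs_of_neg (lt_of_not_ge h'), neg_one_mul]
  rw [key]
  calc φ (∑ n ∈ u, ε n • g n) ≤ ‖φ (∑ n ∈ u, ε n • g n)‖ := le_abs_self _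
    _ ≤ ‖φ‖ * ‖∑ n ∈ u, ε n • g n‖ := φ.le_opNorm _
    _ ≤ ‖φ‖ * C := mul_le_mul_of_nonneg_left (h u ε hεpm) (norm_nonneg φ)

/-- Banach–Steinhaus: pointwise absolute summability gives a uniform bound. -/
lemma exists_bound_of_pointwise {X : Type*} [NormedAddCommGroup X] [NormedSpace ℝ X]
    [CompleteSpace X] (g : ℕ → X →L[ℝ] ℝ) (h : ∀ x, Summable fun n => |g n x|) :
    ∃ C : ℝ, 0 ≤ C ∧
      (∀ (s : Finset ℕ) (ε : ℕ → ℝ), (∀ n, ε n = 1 ∨ ε n = -1) →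
        ‖∑ n ∈ s, ε n • g n‖ ≤ C) ∧ ∀ x, ∑' n, |g n x| ≤ C * ‖x‖ := by
  set T : Finset ℕ × (ℕ → Bool) → X →L[ℝ] ℝ :=
    fun p => ∑ n ∈ p.1, (if p.2 n then (1 : ℝ) else -1) • g n with hT
  have hTx : ∀ p x, ‖T p x‖ ≤ ∑' n, |g n x| := by
    intro p x
    have : T p x = ∑ n ∈ p.1, (if p.2 n then (1 : ℝ) else -1) * g n x := by
      simp only [hT, ContinuousLinearMap.sum_apply]
      exact Finset.sum_congr rfl fun n _ => by rw [ContinuousLinearMap.smul_apply, smul_eq_mul]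
    rw [Real.norm_eq_abs, this]
    calc |∑ n ∈ p.1, (if p.2 n then (1 : ℝ) else -1) * g n x|
        ≤ ∑ n ∈ p.1, |(if p.2 n then (1 : ℝ) else -1) * g n x| := Finset.abs_sum_le_sum_abs _ _
      _ = ∑ n ∈ p.1, |g n x| := by
          refine Finset.sum_congr rfl fun n _ => ?_
          rw [abs_mul]; split_ifs <;> simp
      _ ≤ ∑' n, |g n x| := Summable.sum_le_tsum _ (fun n _ => abs_nonneg _) (h x)
  obtain ⟨C0, hC0⟩ := banach_steinhaus (g := T) fun x => ⟨∑' n, |g n x|, fun p => hTx p x⟩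
  refine ⟨max C0 0, le_max_right _ _, ?_, ?_⟩
  · intro s ε hε
    have : (∑ n ∈ s, ε n • g n) = T (s, fun n => decide (ε n = 1)) := by
      simp only [hT]
      refine Finset.sum_congr rfl fun n _ => ?_
      rcases hε n with h1 | h1 <;> norm_num [h1]
    rw [this]
    exact (hC0 _).trans (le_max_left _ _)
  · intro x
    refine Summable.tsum_le_of_sum_le (h x) fun s => ?_
    set p : Finset ℕ × (ℕ → Bool) := (s, fun n => decide (0 ≤ g n x)) with hp
    have hval : ∑ n ∈ s, |g n x| = T p x := by
      have : T p x = ∑ n ∈ s, (if 0 ≤ g n x then (1 : ℝ) else -1) * g n x := by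
        simp only [hT, hp, ContinuousLinearMap.sum_apply, decide_eq_true_eq]
        exact Finset.sum_congr rfl fun n _ => by rw [ContinuousLinearMap.smul_apply, smul_eq_mul]
      rw [this]
      refine Finset.sum_congr rfl fun n _ => ?_
      split_ifs with h'
      · rw [abs_of_nonneg h', one_mul]
      · rw [abs_of_neg (lt_of_not_ge h'), neg_one_mul]
    calc ∑ n ∈ s, |g n x| = T p x := hval
      _ ≤ ‖T p x‖ := le_abs_self _
      _ ≤ ‖T p‖ * ‖x‖ := (T p).le_opNorm x
      _ ≤ max C0 0 * ‖x‖ :=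
          mul_le_mul_of_nonneg_right ((hC0 p).trans (le_max_left _ _)) (norm_nonneg x)

lemma ellOne_norm_eq (f : ellOne) : ‖f‖ = ∑' n, |(f : ℕ → ℝ) n| := by
  have h := lp.norm_eq_tsum_rpow (p := 1) (by norm_num) f
  simpa using h

lemma memℓp_one_of_summable {f : ℕ → ℝ} (hf : Summable fun n => |f n|) :
    Memℓp f 1 := by
  apply memℓp_gen
  simpa using hf

lemma ellOne_sum_le (f : ellOne) (s : Finset ℕ) :
    ∑ n ∈ s, |(f : ℕ → ℝ) n| ≤ ‖f‖ := by
  have h := lp.sum_rpow_le_norm_rpow (p := 1) (by norm_num) f s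
  simpa using h

lemma ellOne_apply_le (f : ellOne) (n : ℕ) : |(f : ℕ → ℝ) n| ≤ ‖f‖ := by
  have h := lp.norm_apply_le_norm (p := 1) one_ne_zero f n
  simpa using h

/-- Density of the span of `δ '' S` inside the subtype `freeSpan δ S`. -/
lemma dense_span_freeSpan {M : Type*} [MetricSpace M] {F : Type*} [NormedAddCommGroup F]
    [NormedSpace ℝ F] (δ : M → F) (S : Set M) :
    Dense (Submodule.span ℝ {u : ↥(freeSpan δ S) | (u : F) ∈ δ '' S} :
      Set ↥(freeSpan δ S)) := by
  intro u
  rw [closure_subtype]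
  have hle : (Submodule.span ℝ (δ '' S) : Set F) ⊆
      Subtype.val '' (Submodule.span ℝ {u : ↥(freeSpan δ S) | (u : F) ∈ δ '' S} :
        Set ↥(freeSpan δ S)) := by
    intro v hv
    have hspan : Submodule.span ℝ (δ '' S) ≤ Submodule.map (freeSpan δ S).subtype
        (Submodule.span ℝ {u : ↥(freeSpan δ S) | (u : F) ∈ δ '' S}) := by
      rw [Submodule.span_le]
      rintro _ ⟨x, hx, rfl⟩
      exact ⟨⟨δ x, mem_freeSpan δ hx⟩, Submodule.subset_span ⟨x, hx, rfl⟩, rfl⟩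
    obtain ⟨w, hw, rfl⟩ := hspan hv
    exact ⟨w, hw, rfl⟩
  have hu : (u : F) ∈ closure (Submodule.span ℝ (δ '' S) : Set F) := u.2
  exact closure_mono hle hu

/-- Let `K ⊆ M` be a compact subset containing the base point.  The following are
equivalent:
(i) every WUC series `∑ fₙ` in `Lip₀(K)` extends to a WUC series `∑ gₙ` in `Lip₀(M)`
with `gₙ|_K = fₙ` (here `Lip₀(K)` and `Lip₀(M)` are realized as the duals `F(K)*` and
`F(M)*`, a functional `φ` corresponding to the Lipschitz function `x ↦ ⟨φ, δ(x)⟩`);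
(ii) every Lipschitz map `φ : K → ℓ₁` with `φ(0) = 0` extends to a Lipschitz map
`Φ : M → ℓ₁` with `Φ|_K = φ`. -/
theorem wucExtension_iff_ellOneExtension
    {M : Type*} [MetricSpace M] [CompleteSpace M] (o : M)
    {F : Type*} [NormedAddCommGroup F] [NormedSpace ℝ F] [CompleteSpace F]
    (δ : M → F) (hδ : IsLipschitzFree o δ)
    (K : Set M) (hK : IsCompact K) (hoK : o ∈ K) :
    (∀ f : ℕ → (↥(freeSpan δ K) →L[ℝ] ℝ), IsWUC f →
      ∃ g : ℕ → (F →L[ℝ] ℝ), IsWUC g ∧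
        ∀ n : ℕ, ∀ x : M, ∀ hx : x ∈ K,
          g n (δ x) = f n ⟨δ x, mem_freeSpan δ hx⟩) ↔
    (∀ φ : M → ellOne, (∃ C : NNReal, LipschitzOnWith C φ K) → φ o = 0 →
      ∃ Φ : M → ellOne, (∃ C : NNReal, LipschitzWith C Φ) ∧
        ∀ x ∈ K, Φ x = φ x) := by
  constructor
  · -- (i) → (ii)
    intro H φ hφ hφo
    obtain ⟨C, hφC⟩ := hφ
    set φn : ℕ → M → ℝ := fun n x => (φ x : ℕ → ℝ) n with hφn
    have hsub : ∀ (x y : M) (n : ℕ),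
        φn n x - φn n y = ((φ x - φ y : ellOne) : ℕ → ℝ) n := by
      intro x y n; rw [lp.coeFn_sub]; simp [hφn]
    have hlip : ∀ n, LipschitzOnWith C (φn n) K := by
      intro n
      refine LipschitzOnWith.of_dist_le_mul fun x hx y hy => ?_
      rw [Real.dist_eq, hsub x y n]
      calc |((φ x - φ y : ellOne) : ℕ → ℝ) n| ≤ ‖φ x - φ y‖ := ellOne_apply_le _ n
        _ = dist (φ x) (φ y) := (dist_eq_norm _ _).symm
        _ ≤ C * dist x y := hφC.dist_le_mul x hx y hy
    choose ψ hψlip hψeq using fun n => (hlip n).extend_real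
    have hψo : ∀ n, ψ n o = 0 := by
      intro n
      rw [← hψeq n hoK]
      show (φ o : ℕ → ℝ) n = 0
      rw [hφo, lp.coeFn_zero]
      rfl
    choose Fn hFnorm hFeq using fun n => hδ.lift C (ψ n) (hψlip n) (hψo n)
    set f : ℕ → ↥(freeSpan δ K) →L[ℝ] ℝ :=
      fun n => (Fn n).comp (freeSpan δ K).subtypeL with hf
    have hfval : ∀ (n : ℕ) (x : M) (hx : x ∈ K),
        f n ⟨δ x, mem_freeSpan δ hx⟩ = (φ x : ℕ → ℝ) n := by
      intro n x hx
      show Fn n (δ x) = _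
      rw [hFeq n x, ← hψeq n hx]
    have habs1 : ∀ (ε : ℕ → ℝ), (∀ m, ε m = 1 ∨ ε m = -1) → ∀ m, |ε m| = 1 := by
      intro ε hε m; rcases hε m with h1 | h1 <;> rw [h1] <;> norm_num
    have hfWUC : IsWUC f := by
      refine isWUC_of_sign_sums f C fun s ε hε => ?_
      have hulip : LipschitzOnWith C (fun x => ∑ n ∈ s, ε n * φn n x) K := by
        refine LipschitzOnWith.of_dist_le_mul fun x hx y hy => ?_
        rw [Real.dist_eq, ← Finset.sum_sub_distrib]
        calc |∑ n ∈ s, (ε n * φn n x - ε n * φn n y)|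
            ≤ ∑ n ∈ s, |ε n * φn n x - ε n * φn n y| := Finset.abs_sum_le_sum_abs _ _
          _ = ∑ n ∈ s, |((φ x - φ y : ellOne) : ℕ → ℝ) n| := by
              refine Finset.sum_congr rfl fun n _ => ?_
              rw [← mul_sub, abs_mul, habs1 ε hε n, one_mul, hsub x y n]
          _ ≤ ‖φ x - φ y‖ := ellOne_sum_le _ s
          _ = dist (φ x) (φ y) := (dist_eq_norm _ _).symm
          _ ≤ C * dist x y := hφC.dist_le_mul x hx y hy
      obtain ⟨v, hvlip, hveq⟩ := hulip.extend_real
      have hvo : v o = 0 := by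
        rw [← hveq hoK]
        show ∑ n ∈ s, ε n * φn n o = 0
        refine Finset.sum_eq_zero fun n _ => ?_
        have : φn n o = 0 := by
          show (φ o : ℕ → ℝ) n = 0
          rw [hφo, lp.coeFn_zero]; rfl
        rw [this, mul_zero]
      obtain ⟨h, hhnorm, hheq⟩ := hδ.lift C v hvlip hvo
      have hEq : (∑ n ∈ s, ε n • f n) = h.comp (freeSpan δ K).subtypeL := by
        refine ContinuousLinearMap.ext_on (dense_span_freeSpan δ K) fun w hw => ?_
        obtain ⟨x, hx, hxw⟩ := hw
        have hL : (∑ n ∈ s, ε n • f n) w = ∑ n ∈ s, ε n * Fn n (w : F) := by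
          simp only [ContinuousLinearMap.sum_apply, ContinuousLinearMap.smul_apply,
            smul_eq_mul]
          rfl
        have hR : h.comp (freeSpan δ K).subtypeL w = h (w : F) := rfl
        rw [hL, hR, ← hxw, hheq x, ← hveq hx]
        exact Finset.sum_congr rfl fun n _ => by rw [hFeq n x, ← hψeq n hx]
      rw [hEq]
      refine ContinuousLinearMap.opNorm_le_bound _ C.coe_nonneg fun w => ?_
      calc ‖h.comp (freeSpan δ K).subtypeL w‖ = ‖h (w : F)‖ := rfl
        _ ≤ ‖h‖ * ‖(w : F)‖ := h.le_opNorm _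
        _ ≤ (C : ℝ) * ‖w‖ := by
            apply mul_le_mul hhnorm le_rfl (norm_nonneg _) C.coe_nonneg
    obtain ⟨g, hgWUC, hgval⟩ := H f hfWUC
    have hpw : ∀ u : F, Summable fun n => |g n u| := fun u =>
      hgWUC (ContinuousLinearMap.apply ℝ ℝ u)
    obtain ⟨C', hC'0, _, hbound⟩ := exists_bound_of_pointwise g hpw
    set Φ : M → ellOne := fun x =>
      ⟨fun n => g n (δ x), memℓp_one_of_summable (hpw (δ x))⟩ with hΦ
    refine ⟨Φ, ⟨C'.toNNReal, ?_⟩, ?_⟩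
    · refine LipschitzWith.of_dist_le_mul fun x y => ?_
      rw [dist_eq_norm, ellOne_norm_eq, Real.coe_toNNReal C' hC'0]
      have hcoord : ∀ n, ((Φ x - Φ y : ellOne) : ℕ → ℝ) n = g n (δ x - δ y) := by
        intro n; rw [lp.coeFn_sub]
        show g n (δ x) - g n (δ y) = g n (δ x - δ y)
        rw [map_sub]
      calc (∑' n, |((Φ x - Φ y : ellOne) : ℕ → ℝ) n|)
          = ∑' n, |g n (δ x - δ y)| := by
            exact tsum_congr fun n => by rw [hcoord n]
        _ ≤ C' * ‖δ x - δ y‖ := hbound _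
        _ = C' * dist x y := by rw [← dist_eq_norm, hδ.isometry.dist_eq]
    · intro x hx
      refine lp.ext (funext fun n => ?_)
      show g n (δ x) = (φ x : ℕ → ℝ) n
      rw [hgval n x hx, hfval n x hx]
  · -- (ii) → (i)
    intro H f hfWUC
    classical
    haveI : CompleteSpace ↥(freeSpan δ K) :=
      (Submodule.isClosed_topologicalClosure _).completeSpace_coe
    have hpw : ∀ u : ↥(freeSpan δ K), Summable fun n => |f n u| := fun u =>
      hfWUC (ContinuousLinearMap.apply ℝ ℝ u)
    obtain ⟨C, hC0, _, hbound⟩ := exists_bound_of_pointwise f hpw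
    set φ : M → ellOne := fun x =>
      if hx : x ∈ K then
        ⟨fun n => f n ⟨δ x, mem_freeSpan δ hx⟩, memℓp_one_of_summable (hpw _)⟩
      else 0 with hφ
    have hφcoe : ∀ (x : M) (hx : x ∈ K) (n : ℕ),
        (φ x : ℕ → ℝ) n = f n ⟨δ x, mem_freeSpan δ hx⟩ := by
      intro x hx n
      simp only [hφ, dif_pos hx]
    have hφo : φ o = 0 := by
      refine lp.ext (funext fun n => ?_)
      rw [hφcoe o hoK n]
      have h0 : (⟨δ o, mem_freeSpan δ hoK⟩ : ↥(freeSpan δ K)) = 0 :=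
        Subtype.ext (by simp [hδ.map_base])
      rw [h0, map_zero, lp.coeFn_zero]
      rfl
    have hφlip : LipschitzOnWith C.toNNReal φ K := by
      refine LipschitzOnWith.of_dist_le_mul fun x hx y hy => ?_
      rw [dist_eq_norm, ellOne_norm_eq, Real.coe_toNNReal C hC0]
      set w : ↥(freeSpan δ K) :=
        (⟨δ x, mem_freeSpan δ hx⟩ : ↥(freeSpan δ K)) - ⟨δ y, mem_freeSpan δ hy⟩ with hw
      have hcoord : ∀ n, ((φ x - φ y : ellOne) : ℕ → ℝ) n = f n w := by
        intro n; rw [lp.coeFn_sub]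
        show (φ x : ℕ → ℝ) n - (φ y : ℕ → ℝ) n = f n w
        rw [hφcoe x hx n, hφcoe y hy n, hw, map_sub]
      have hwn : ‖w‖ = dist x y := by
        have : ((w : F)) = δ x - δ y := by rw [hw]; rfl
        rw [show ‖w‖ = ‖(w : F)‖ from rfl, this, ← dist_eq_norm, hδ.isometry.dist_eq]
      calc (∑' n, |((φ x - φ y : ellOne) : ℕ → ℝ) n|) = ∑' n, |f n w| :=
            tsum_congr fun n => by rw [hcoord n]
        _ ≤ C * ‖w‖ := hbound w
        _ = C * dist x y := by rw [hwn]
    obtain ⟨Φ, ⟨L, hL⟩, hΦeq⟩ := H φ ⟨C.toNNReal, hφlip⟩ hφo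
    set Φn : ℕ → M → ℝ := fun n x => (Φ x : ℕ → ℝ) n with hΦn
    have hsub : ∀ (x y : M) (n : ℕ),
        Φn n x - Φn n y = ((Φ x - Φ y : ellOne) : ℕ → ℝ) n := by
      intro x y n; rw [lp.coeFn_sub]; simp [hΦn]
    have hΦnlip : ∀ n, LipschitzWith L (Φn n) := by
      intro n
      refine LipschitzWith.of_dist_le_mul fun x y => ?_
      rw [Real.dist_eq, hsub x y n]
      calc |((Φ x - Φ y : ellOne) : ℕ → ℝ) n| ≤ ‖Φ x - Φ y‖ := ellOne_apply_le _ n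
        _ = dist (Φ x) (Φ y) := (dist_eq_norm _ _).symm
        _ ≤ L * dist x y := hL.dist_le_mul x y
    have hΦno : ∀ n, Φn n o = 0 := by
      intro n
      have h1 : Φ o = 0 := by rw [hΦeq o hoK, hφo]
      show (Φ o : ℕ → ℝ) n = 0
      rw [h1, lp.coeFn_zero]
      rfl
    choose g hgnorm hgeq using fun n => hδ.lift L (Φn n) (hΦnlip n) (hΦno n)
    have habs1 : ∀ (ε : ℕ → ℝ), (∀ m, ε m = 1 ∨ ε m = -1) → ∀ m, |ε m| = 1 := by
      intro ε hε m; rcases hε m with h1 | h1 <;> rw [h1] <;> norm_num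
    refine ⟨g, ?_, ?_⟩
    · refine isWUC_of_sign_sums g L fun s ε hε => ?_
      have hulip : LipschitzWith L (fun x => ∑ n ∈ s, ε n * Φn n x) := by
        refine LipschitzWith.of_dist_le_mul fun x y => ?_
        rw [Real.dist_eq, ← Finset.sum_sub_distrib]
        calc |∑ n ∈ s, (ε n * Φn n x - ε n * Φn n y)|
            ≤ ∑ n ∈ s, |ε n * Φn n x - ε n * Φn n y| := Finset.abs_sum_le_sum_abs _ _
          _ = ∑ n ∈ s, |((Φ x - Φ y : ellOne) : ℕ → ℝ) n| := by
              refine Finset.sum_congr rfl fun n _ => ?_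
              rw [← mul_sub, abs_mul, habs1 ε hε n, one_mul, hsub x y n]
          _ ≤ ‖Φ x - Φ y‖ := ellOne_sum_le _ s
          _ = dist (Φ x) (Φ y) := (dist_eq_norm _ _).symm
          _ ≤ L * dist x y := hL.dist_le_mul x y
      have huo : (∑ n ∈ s, ε n * Φn n o) = 0 :=
        Finset.sum_eq_zero fun n _ => by rw [hΦno n, mul_zero]
      obtain ⟨h, hhnorm, hheq⟩ := hδ.lift L _ hulip huo
      have hEq : (∑ n ∈ s, ε n • g n) = h := by
        refine ContinuousLinearMap.ext_on hδ.dense_span fun w hw => ?_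
        obtain ⟨x, rfl⟩ := hw
        rw [hheq x]
        simp only [ContinuousLinearMap.sum_apply, ContinuousLinearMap.smul_apply,
          smul_eq_mul]
        exact Finset.sum_congr rfl fun n _ => by rw [hgeq n x]
      rw [hEq]
      exact hhnorm
    · intro n x hx
      rw [hgeq n x]
      show (Φ x : ℕ → ℝ) n = _
      rw [hΦeq x hx, hφcoe x hx n]
end
end

section
/- If M is a uniformly discrete pointed metric space, i.e. inf{d(x,y) : x ≠ y ∈ M} > 0, then the Lipschitz-free space F(M) has property (V*). -/
open Filter Topology Metric Set

noncomputable section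

/-!
A (V*)-set `Γ` in `F(M)` is even relatively norm compact. Two gliding-hump arguments show that
`Γ` is uniformly small on norm-one functionals vanishing on a large ball around the base point,
and on functionals bounded on `δ(M)` by half the separation `θ` of `M` and vanishing on a
suitable finite set `A`: otherwise one cuts the offending functionals off, by a radial cutoff on
lacunary annuli or by restriction to finite sets, into pieces with pairwise separated supports.
All signed sums of such pieces are uniformly Lipschitz, so the pieces form a WUC series in
`Lip₀(M) = F(M)*`, and (V*) forces them to be eventually small on `Γ`, a contradiction.
Splitting a norm-one functional into a radial tail, a bounded part vanishing on `A`, and a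
combination of the coordinate functionals of the points of `A` then puts `Γ` within `ε` of a
bounded subset of the span of `δ(A)`. Uniform discreteness is what makes bounded functions
vanishing at the base point Lipschitz.
-/

open scoped NNReal

section NormedSpace

variable {X : Type*} [NormedAddCommGroup X] [NormedSpace ℝ X]

theorem IsWUC.of_norm_sum_smul_le {f : ℕ → X →L[ℝ] ℝ} {C : ℝ}
    (h : ∀ (s : Finset ℕ) (c : ℕ → ℝ), (∀ k, |c k| ≤ 1) → ‖∑ k ∈ s, c k • f k‖ ≤ C) :
    IsWUC f := by
  intro ψ
  refine summable_of_sum_le (c := ‖ψ‖ * C) (fun _ => abs_nonneg _) fun s => ?_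
  have hc : ∀ k, |(SignType.sign (ψ (f k)) : ℝ)| ≤ 1 := fun k => by
    rcases SignType.sign (ψ (f k)) with _ | _ | _ <;> simp
  calc ∑ k ∈ s, |ψ (f k)| = ψ (∑ k ∈ s, (SignType.sign (ψ (f k)) : ℝ) • f k) := by
        simp [map_sum, sign_mul_self]
    _ ≤ ‖ψ‖ * ‖∑ k ∈ s, (SignType.sign (ψ (f k)) : ℝ) • f k‖ :=
        (le_abs_self _).trans (ψ.le_opNorm _)
    _ ≤ ‖ψ‖ * C := by gcongr; exact h s _ hc

theorem IsVStarSet.isBounded {Γ : Set X} (hV : IsVStarSet Γ) : Bornology.IsBounded Γ := by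
  have hweak : ∀ φ : X →L[ℝ] ℝ, ∃ C, ∀ x ∈ Γ, |φ x| ≤ C := by
    intro φ
    have hwuc : IsWUC fun n => (2⁻¹ : ℝ) ^ n • φ := fun ψ => by
      simpa [abs_mul] using summable_geometric_two.mul_right |ψ φ|
    obtain ⟨n, hn⟩ := (hV _ hwuc 1 one_pos).exists
    refine ⟨2 ^ n, fun x hx => ?_⟩
    have := hn x hx
    simp only [smul_apply, smul_eq_mul, abs_mul, inv_pow] at this
    rwa [abs_of_pos (by positivity), inv_mul_le_iff₀ (by positivity), mul_one] at this
  obtain ⟨C, hC⟩ := banach_steinhaus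
    (g := fun x : Γ => NormedSpace.inclusionInDoubleDualLi ℝ (E := X) x)
    fun φ => (hweak φ).imp fun C hC x => hC x x.2
  refine isBounded_iff_forall_norm_le.2 ⟨C, fun x hx => ?_⟩
  simpa only [LinearIsometry.norm_map] using hC ⟨x, hx⟩

theorem totallyBounded_of_forall_exists_finiteDimensional {s : Set X}
    (hs : Bornology.IsBounded s)
    (h : ∀ ε > 0, ∃ S : Submodule ℝ X, FiniteDimensional ℝ S ∧ ∀ x ∈ s, ∃ y ∈ S, ‖x - y‖ ≤ ε) :
    TotallyBounded s := by
  obtain ⟨C, hC⟩ := isBounded_iff_forall_norm_le.1 hs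
  refine Metric.totallyBounded_iff.2 fun ε hε => ?_
  obtain ⟨S, hS, hsS⟩ := h (ε / 2) (by positivity)
  have hK : TotallyBounded (((↑) : S → X) '' Metric.closedBall 0 (C + ε / 2)) :=
    ((isCompact_closedBall _ _).image continuous_subtype_val).totallyBounded
  obtain ⟨t, ht, hKt⟩ := Metric.totallyBounded_iff.1 hK (ε / 2) (by positivity)
  refine ⟨t, ht, fun x hx => ?_⟩
  obtain ⟨y, hyS, hxy⟩ := hsS x hx
  have hyK : y ∈ ((↑) : S → X) '' Metric.closedBall 0 (C + ε / 2) := by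
    refine ⟨⟨y, hyS⟩, ?_, rfl⟩
    rw [mem_closedBall_zero_iff]
    show ‖y‖ ≤ C + ε / 2
    linarith [norm_sub_norm_le y x, norm_sub_rev y x, hC x hx]
  obtain ⟨z, hz, hyz⟩ := Set.mem_iUnion₂.1 (hKt hyK)
  refine Set.mem_iUnion₂.2 ⟨z, hz, ?_⟩
  rw [Metric.mem_ball] at hyz ⊢
  linarith [dist_triangle x y z, dist_eq_norm x y]

theorem relWeaklyCompact_of_totallyBounded [CompleteSpace X] {Γ : Set X}
    (hΓ : TotallyBounded Γ) : RelWeaklyCompact Γ :=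
  ((hΓ.closure.isCompact_of_isClosed isClosed_closure).image
    (toWeakSpaceCLM ℝ X).continuous).closure_of_subset (Set.image_mono subset_closure)

end NormedSpace

section MetricSpace

variable {M : Type*} [PseudoMetricSpace M] {o : M}

theorem LipschitzWith.sum_mul_of_separated {ι : Type*} [LinearOrder ι] {G : ι → M → ℝ}
    {L : ℝ≥0} (hG : ∀ i, LipschitzWith L (G i))
    (hlt : ∀ i j, i < j → ∀ u v, G i u ≠ 0 → G j v ≠ 0 → |G i u| + |G j v| ≤ L * dist u v)
    (s : Finset ι) {c : ι → ℝ} (hc : ∀ i, |c i| ≤ 1) :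
    LipschitzWith L fun y => ∑ i ∈ s, c i * G i y := by
  have hsep : ∀ i j, i ≠ j → ∀ u v, G i u ≠ 0 → G j v ≠ 0 → |G i u| + |G j v| ≤ L * dist u v := by
    intro i j hij u v hu hv
    rcases hij.lt_or_gt with h | h
    · exact hlt i j h u v hu hv
    · rw [add_comm, dist_comm]; exact hlt j i h v u hv hu
  have hsum : ∀ y, ∀ i ∈ s, (∀ k ∈ s, k ≠ i → G k y = 0) →
      ∑ k ∈ s, c k * G k y = c i * G i y := fun y i hi h =>
    Finset.sum_eq_single_of_mem i hi fun k hk hki => by rw [h k hk hki, mul_zero]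
  have hone : ∀ y i, G i y ≠ 0 → ∀ k, k ≠ i → G k y = 0 := fun y i hi k hki => by
    by_contra hk
    have := hsep k i hki y y hk hi
    rw [dist_self, mul_zero] at this
    linarith [abs_pos.2 hk, abs_pos.2 hi]
  have hsingle : ∀ i u v, |c i * G i u - c i * G i v| ≤ L * dist u v := fun i u v => by
    rw [← mul_sub, abs_mul, ← Real.dist_eq]
    exact (mul_le_of_le_one_left (abs_nonneg _) (hc i)).trans ((hG i).dist_le_mul u v)
  refine LipschitzWith.of_dist_le_mul fun u v => ?_
  rw [Real.dist_eq]
  by_cases hu : ∃ i ∈ s, G i u ≠ 0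
  · obtain ⟨i, hi, hiu⟩ := hu
    rw [hsum u i hi fun k _ => hone u i hiu k]
    by_cases hv : ∃ j ∈ s, j ≠ i ∧ G j v ≠ 0
    · obtain ⟨j, hj, hji, hjv⟩ := hv
      rw [hsum v j hj fun k _ => hone v j hjv k]
      calc |c i * G i u - c j * G j v| ≤ |G i u| + |G j v| := by
            refine (abs_sub _ _).trans (add_le_add ?_ ?_) <;>
              rw [abs_mul] <;> exact mul_le_of_le_one_left (abs_nonneg _) (hc _)
        _ ≤ L * dist u v := hsep i j hji.symm u v hiu hjv
    · push Not at hv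
      rw [hsum v i hi fun k hk hki => hv k hk hki]
      exact hsingle i u v
  · push Not at hu
    by_cases hv : ∃ j ∈ s, G j v ≠ 0
    · obtain ⟨j, hj, hjv⟩ := hv
      rw [hsum v j hj fun k _ => hone v j hjv k, hsum u j hj fun k hk _ => hu k hk]
      exact hsingle j u v
    · push Not at hv
      rw [Finset.sum_eq_zero fun k hk => by rw [hu k hk, mul_zero],
        Finset.sum_eq_zero fun k hk => by rw [hv k hk, mul_zero], sub_zero, abs_zero]
      positivity

theorem lipschitzWith_one_of_abs_le_half {θ : ℝ} (hsep : ∀ x y : M, x ≠ y → θ ≤ dist x y)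
    {f : M → ℝ} (hf : ∀ y, |f y| ≤ θ / 2) : LipschitzWith 1 f := by
  refine LipschitzWith.of_dist_le_mul fun u v => ?_
  rcases eq_or_ne u v with rfl | huv
  · simp
  · rw [Real.dist_eq, NNReal.coe_one, one_mul]
    linarith [abs_sub (f u) (f v), hf u, hf v, hsep u v huv]

theorem add_dist_le_of_four_mul_le {u v : M} (h : 4 * dist u o ≤ dist v o) :
    dist u o + dist v o ≤ 2 * dist u v := by
  linarith [dist_triangle v u o, dist_comm u v, dist_nonneg (x := u) (y := o)]

def cutoff (r t : ℝ) : ℝ := max 0 (min 1 (2 - t / r))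

theorem cutoff_nonneg (r t : ℝ) : 0 ≤ cutoff r t := le_max_left _ _

theorem cutoff_le_one (r t : ℝ) : cutoff r t ≤ 1 := max_le zero_le_one (min_le_left _ _)

theorem cutoff_of_le {r t : ℝ} (hr : 0 < r) (h : t ≤ r) : cutoff r t = 1 := by
  have : t / r ≤ 1 := (div_le_one hr).2 h
  rw [cutoff, min_eq_left (by linarith), max_eq_right zero_le_one]

theorem cutoff_of_two_mul_le {r t : ℝ} (hr : 0 < r) (h : 2 * r ≤ t) : cutoff r t = 0 := by
  have : 2 ≤ t / r := (le_div_iff₀ hr).2 h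
  rw [cutoff, min_eq_right (by linarith), max_eq_left (by linarith)]

theorem abs_cutoff_sub_le {r : ℝ} (hr : 0 < r) (s t : ℝ) :
    |cutoff r s - cutoff r t| ≤ |s - t| / r := by
  calc |cutoff r s - cutoff r t| ≤ |min 1 (2 - s / r) - min 1 (2 - t / r)| := by
        simpa [cutoff] using abs_max_sub_max_le_max 0 (min 1 (2 - s / r)) 0 (min 1 (2 - t / r))
    _ ≤ |(2 - s / r) - (2 - t / r)| := by
        simpa using abs_min_sub_min_le_max 1 (2 - s / r) 1 (2 - t / r)
    _ = |s - t| / r := by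
        rw [show (2 - s / r) - (2 - t / r) = -((s - t) / r) by ring, abs_neg, abs_div,
          abs_of_pos hr]

theorem mul_abs_cutoff_sub_le {r a b : ℝ} (hr : 0 < r) (hb : 0 ≤ b) :
    b * |cutoff r a - cutoff r b| ≤ 3 * |a - b| := by
  rcases le_or_gt b (3 * r) with hb3 | hb3
  · calc b * |cutoff r a - cutoff r b| ≤ 3 * r * (|a - b| / r) := by
          gcongr; exact abs_cutoff_sub_le hr a b
      _ = 3 * |a - b| := by field_simp
  · rw [cutoff_of_two_mul_le hr (by linarith : 2 * r ≤ b), sub_zero,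
      abs_of_nonneg (cutoff_nonneg r a)]
    rcases le_or_gt (2 * r) a with ha | ha
    · rw [cutoff_of_two_mul_le hr ha, mul_zero]; positivity
    · calc b * cutoff r a ≤ b * 1 := by gcongr; exact cutoff_le_one r a
        _ ≤ 3 * |a - b| := by rw [abs_sub_comm]; linarith [le_abs_self (b - a)]

theorem lipschitzWith_cutoff_mul {r : ℝ} (hr : 0 < r) {K : ℝ≥0} {g : M → ℝ}
    (hg : LipschitzWith K g) (hgo : g o = 0) :
    LipschitzWith (4 * K) fun y => cutoff r (dist y o) * g y := by
  refine LipschitzWith.of_dist_le_mul fun u v => ?_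
  have hgv : |g v| ≤ K * dist v o := by simpa [hgo, Real.dist_eq] using hg.dist_le_mul v o
  have hdist : |dist u o - dist v o| ≤ dist u v := abs_dist_sub_le u v o
  have h₁ : |cutoff r (dist u o) * (g u - g v)| ≤ K * dist u v := by
    rw [abs_mul, ← Real.dist_eq]
    exact mul_le_of_le_one_left (abs_nonneg _)
      (by rw [abs_of_nonneg (cutoff_nonneg _ _)]; exact cutoff_le_one _ _)
      |>.trans (hg.dist_le_mul u v)
  have h₂ : |g v * (cutoff r (dist u o) - cutoff r (dist v o))| ≤ 3 * K * dist u v := by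
    rw [abs_mul]
    calc |g v| * |cutoff r (dist u o) - cutoff r (dist v o)|
        ≤ K * (dist v o * |cutoff r (dist u o) - cutoff r (dist v o)|) := by
          rw [← mul_assoc]; gcongr
      _ ≤ K * (3 * dist u v) := by
          refine mul_le_mul_of_nonneg_left ?_ K.coe_nonneg
          exact (mul_abs_cutoff_sub_le hr dist_nonneg).trans (by gcongr)
      _ = 3 * K * dist u v := by ring
  rw [Real.dist_eq, show cutoff r (dist u o) * g u - cutoff r (dist v o) * g v
    = cutoff r (dist u o) * (g u - g v) + g v * (cutoff r (dist u o) - cutoff r (dist v o))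
    by ring]
  push_cast
  linarith [abs_add_le (cutoff r (dist u o) * (g u - g v))
    (g v * (cutoff r (dist u o) - cutoff r (dist v o)))]

end MetricSpace

namespace IsLipschitzFree

variable {M : Type*} [MetricSpace M] {o : M}
  {F : Type*} [NormedAddCommGroup F] [NormedSpace ℝ F] {δ : M → F}

theorem ext (hδ : IsLipschitzFree o δ) {ψ₁ ψ₂ : F →L[ℝ] ℝ} (h : ∀ x, ψ₁ (δ x) = ψ₂ (δ x)) :
    ψ₁ = ψ₂ :=
  ContinuousLinearMap.ext_on hδ.dense_span (by rintro _ ⟨x, rfl⟩; exact h x)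

theorem lipschitzWith_apply (hδ : IsLipschitzFree o δ) (ψ : F →L[ℝ] ℝ) :
    LipschitzWith ‖ψ‖₊ fun x => ψ (δ x) :=
  (ψ.lipschitz.comp hδ.isometry.lipschitz).weaken (mul_one _).le

theorem abs_apply_le (hδ : IsLipschitzFree o δ) (ψ : F →L[ℝ] ℝ) (y : M) :
    |ψ (δ y)| ≤ ‖ψ‖ * dist y o := by
  simpa [hδ.map_base, Real.dist_eq] using (hδ.lipschitzWith_apply ψ).dist_le_mul y o

theorem norm_le_of_lipschitzWith (hδ : IsLipschitzFree o δ) {ψ : F →L[ℝ] ℝ} {K : ℝ≥0}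
    (h : LipschitzWith K fun x => ψ (δ x)) : ‖ψ‖ ≤ K := by
  obtain ⟨φ, hφK, hφ⟩ := hδ.lift K _ h (by simp [hδ.map_base])
  rwa [← hδ.ext hφ]

theorem lipschitzWith_cutoff_mul_apply (hδ : IsLipschitzFree o δ) {r : ℝ} (hr : 0 < r)
    {ψ : F →L[ℝ] ℝ} (hψ : ‖ψ‖ ≤ 1) :
    LipschitzWith 4 fun y => cutoff r (dist y o) * ψ (δ y) :=
  (lipschitzWith_cutoff_mul hr (hδ.lipschitzWith_apply ψ) (by simp [hδ.map_base])).weaken <| by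
    rw [← NNReal.coe_le_coe]; push_cast; linarith

theorem abs_cutoff_mul_apply_le (hδ : IsLipschitzFree o δ) (r : ℝ) {ψ : F →L[ℝ] ℝ}
    (hψ : ‖ψ‖ ≤ 1) (y : M) : |cutoff r (dist y o) * ψ (δ y)| ≤ dist y o := by
  rw [abs_mul, abs_of_nonneg (cutoff_nonneg _ _)]
  exact (mul_le_of_le_one_left (abs_nonneg _) (cutoff_le_one _ _)).trans
    ((hδ.abs_apply_le ψ y).trans (mul_le_of_le_one_left dist_nonneg hψ))

theorem isWUC_of_separated (hδ : IsLipschitzFree o δ) {f : ℕ → F →L[ℝ] ℝ} {L : ℝ≥0}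
    (hL : ∀ k, LipschitzWith L fun y => f k (δ y))
    (hlt : ∀ i j, i < j → ∀ u v, f i (δ u) ≠ 0 → f j (δ v) ≠ 0 →
      |f i (δ u)| + |f j (δ v)| ≤ L * dist u v) :
    IsWUC f :=
  IsWUC.of_norm_sum_smul_le fun s c hc => hδ.norm_le_of_lipschitzWith <| by
    simpa using LipschitzWith.sum_mul_of_separated hL hlt s hc

theorem exists_finset_abs_apply_le (hδ : IsLipschitzFree o δ) (μ : F) {ε : ℝ} (hε : 0 < ε) :
    ∃ D : Finset M, ∀ ψ : F →L[ℝ] ℝ, (∀ y ∈ D, ψ (δ y) = 0) → |ψ μ| ≤ ε * ‖ψ‖ := by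
  obtain ⟨ν, hν, hμν⟩ := Metric.mem_closure_iff.1 (hδ.dense_span μ) ε hε
  obtain ⟨c, rfl⟩ := Finsupp.mem_span_range_iff_exists_finsupp.1 hν
  refine ⟨c.support, fun ψ hψ => ?_⟩
  have hψν : ψ (c.sum fun x a => a • δ x) = 0 := by
    rw [map_finsuppSum]
    exact Finset.sum_eq_zero fun x hx => show ψ (c x • δ x) = 0 by rw [map_smul, hψ x hx, smul_zero]
  calc |ψ μ| = ‖ψ (μ - c.sum fun x a => a • δ x)‖ := by rw [map_sub, hψν, sub_zero]; rfl
    _ ≤ ‖ψ‖ * ‖μ - c.sum fun x a => a • δ x‖ := ψ.le_opNorm _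
    _ ≤ ε * ‖ψ‖ := by rw [mul_comm, ← dist_eq_norm]; gcongr

theorem exists_nat_gt_abs_apply_le (hδ : IsLipschitzFree o δ) (μ : F) {ε : ℝ} (hε : 0 < ε)
    (n : ℕ) : ∃ R : ℕ, n < R ∧
      ∀ ψ : F →L[ℝ] ℝ, (∀ y, dist y o ≤ R → ψ (δ y) = 0) → |ψ μ| ≤ ε * ‖ψ‖ := by
  obtain ⟨D, hD⟩ := hδ.exists_finset_abs_apply_le μ hε
  obtain ⟨R, hR⟩ := D.finite_toSet.isBounded.subset_closedBall o
  refine ⟨⌈R⌉₊ + n + 1, by omega, fun ψ hψ => hD ψ fun y hy => hψ y ?_⟩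
  calc dist y o ≤ R := hR hy
    _ ≤ ⌈R⌉₊ := Nat.le_ceil R
    _ ≤ (⌈R⌉₊ + n + 1 : ℕ) := by exact_mod_cast by omega

open Classical in
theorem exists_apply_eq_ite (hδ : IsLipschitzFree o δ) {θ : ℝ} (hθ : 0 < θ)
    (hsep : ∀ x y : M, x ≠ y → θ ≤ dist x y) {x : M} (hx : x ≠ o) :
    ∃ e : F →L[ℝ] ℝ, ∀ y, e (δ y) = if y = x then 1 else 0 := by
  have hf : ∀ y, |(if y = x then θ / 2 else 0)| ≤ θ / 2 := fun y => by
    split_ifs <;> simp [abs_of_pos, hθ, (half_pos hθ).le]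
  obtain ⟨ψ, -, hψ⟩ := hδ.lift 1 _ (lipschitzWith_one_of_abs_le_half hsep hf)
    (if_neg hx.symm)
  refine ⟨(2 / θ) • ψ, fun y => ?_⟩
  rw [smul_apply, hψ, smul_eq_mul]
  split_ifs
  · field_simp
  · rw [mul_zero]

open Classical in
theorem exists_decomposition (hδ : IsLipschitzFree o δ) {r : ℝ} (hr : 0 < r)
    (A : Finset M) {e : M → F →L[ℝ] ℝ}
    (he : ∀ x, x ≠ o → ∀ y, e x (δ y) = if y = x then 1 else 0)
    {φ : F →L[ℝ] ℝ} (hφ : ‖φ‖ ≤ 1) :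
    ∃ ψ₁ ψ₂ : F →L[ℝ] ℝ, φ = ψ₁ + ψ₂ + ∑ x ∈ A, (cutoff r (dist x o) * φ (δ x)) • e x ∧
      ‖ψ₁‖ ≤ 5 ∧ (∀ y, dist y o ≤ r → ψ₁ (δ y) = 0) ∧
      (∀ y, |ψ₂ (δ y)| ≤ 2 * r) ∧ ∀ y ∈ A, ψ₂ (δ y) = 0 := by
  set g : M → ℝ := fun y => cutoff r (dist y o) * φ (δ y)
  have hgo : g o = 0 := by simp [g, hδ.map_base]
  have hg : ∀ y, |g y| ≤ 2 * r := fun y => by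
    rcases le_or_gt (2 * r) (dist y o) with hy | hy
    · simp [g, cutoff_of_two_mul_le hr hy, hr.le]
    · exact (hδ.abs_cutoff_mul_apply_le r hφ y).trans hy.le
  obtain ⟨ψ, hψ4, hψ⟩ := hδ.lift 4 g (hδ.lipschitzWith_cutoff_mul_apply hr hφ) hgo
  have hsum : ∀ y, (∑ x ∈ A, (cutoff r (dist x o) * φ (δ x)) • e x) (δ y) =
      if y ∈ A then g y else 0 := fun y => by
    simp only [sum_apply, smul_apply, smul_eq_mul]
    rw [← Finset.sum_ite_eq A y g]
    refine Finset.sum_congr rfl fun x _ => ?_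
    by_cases hx : x = o
    · subst hx; simp [hδ.map_base, hgo]
    · rw [he x hx y]; split_ifs <;> simp [g]
  refine ⟨φ - ψ, ψ - ∑ x ∈ A, (cutoff r (dist x o) * φ (δ x)) • e x, by abel, ?_, ?_, ?_, ?_⟩
  · exact (norm_sub_le _ _).trans (by push_cast at hψ4; linarith)
  · intro y hy
    simp [hψ, g, cutoff_of_le hr hy]
  · intro y
    rw [sub_apply, hψ, hsum]
    split_ifs
    · simpa using hr.le
    · simpa using hg y
  · intro y hy
    rw [sub_apply, hψ, hsum, if_pos hy, sub_self]

end IsLipschitzFree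

namespace IsVStarSet

variable {M : Type*} [MetricSpace M] {o : M}
  {F : Type*} [NormedAddCommGroup F] [NormedSpace ℝ F] {δ : M → F} {Γ : Set F}

theorem exists_abs_apply_le_of_separated (hV : IsVStarSet Γ) (hδ : IsLipschitzFree o δ)
    {f : ℕ → F →L[ℝ] ℝ} {L : ℝ≥0} (hL : ∀ k, LipschitzWith L fun y => f k (δ y))
    (hlt : ∀ i j, i < j → ∀ u v, f i (δ u) ≠ 0 → f j (δ v) ≠ 0 →
      |f i (δ u)| + |f j (δ v)| ≤ L * dist u v) {η : ℝ} (hη : 0 < η) :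
    ∃ n, ∀ μ ∈ Γ, |f n μ| ≤ η :=
  (hV f (hδ.isWUC_of_separated hL hlt) η hη).exists

theorem exists_radius (hV : IsVStarSet Γ) (hδ : IsLipschitzFree o δ) {η : ℝ} (hη : 0 < η) :
    ∃ r > 0, ∀ ψ : F →L[ℝ] ℝ, ‖ψ‖ ≤ 1 → (∀ y, dist y o ≤ r → ψ (δ y) = 0) →
      ∀ μ ∈ Γ, |ψ μ| ≤ η := by
  by_contra! hcon
  choose ψ hψ1 hψ0 μ hμ hψμ using fun n : ℕ => hcon (n + 1) (by positivity)
  choose R hnR hR using fun n => hδ.exists_nat_gt_abs_apply_le (μ n) (by positivity : 0 < η / 10) n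
  -- shells `m k + 1 < dist y o < 2 * R (m k)`; consecutive ones are a factor `4` apart
  obtain ⟨m, hm8⟩ : ∃ m : ℕ → ℕ, ∀ k, m (k + 1) = 8 * R (m k) :=
    ⟨fun k => Nat.rec 0 (fun _ n => 8 * R n) k, fun _ => rfl⟩
  have hm : StrictMono m := strictMono_nat_of_lt_succ fun k => by
    have := hnR (m k); rw [hm8]; omega
  have hRpos : ∀ k, (0 : ℝ) < R (m k) := fun k => by
    exact_mod_cast (Nat.zero_le _).trans_lt (hnR (m k))
  let G : ℕ → M → ℝ := fun k y => cutoff (R (m k)) (dist y o) * ψ (m k) (δ y)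
  have hG : ∀ k, LipschitzWith 4 (G k) := fun k =>
    hδ.lipschitzWith_cutoff_mul_apply (hRpos k) (hψ1 (m k))
  have hGd : ∀ k y, |G k y| ≤ dist y o := fun k => hδ.abs_cutoff_mul_apply_le _ (hψ1 (m k))
  have hsupp : ∀ k y, G k y ≠ 0 → (m k : ℝ) + 1 < dist y o ∧ dist y o < 2 * R (m k) :=
    fun k y hy => by
      constructor
      · by_contra! h
        exact hy (by simp [G, hψ0 (m k) y h])
      · by_contra! h
        exact hy (by simp [G, cutoff_of_two_mul_le (hRpos k) h])
  choose f hf4 hf using fun k => hδ.lift 4 (G k) (hG k) (by simp [G, hδ.map_base])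
  have hlt : ∀ i j, i < j → ∀ u v, G i u ≠ 0 → G j v ≠ 0 → |G i u| + |G j v| ≤ 4 * dist u v := by
    intro i j hij u v hu hv
    have hmij : (8 * R (m i) : ℝ) ≤ m j := by
      exact_mod_cast hm8 i ▸ hm.monotone (Nat.succ_le_of_lt hij)
    have := add_dist_le_of_four_mul_le (o := o) (u := u) (v := v)
      (by linarith [(hsupp i u hu).2, (hsupp j v hv).1])
    linarith [hGd i u, hGd j v, dist_nonneg (x := u) (y := v)]
  obtain ⟨n, hn⟩ := hV.exists_abs_apply_le_of_separated hδ (f := f) (L := 4)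
    (by simpa [hf] using hG) (by simpa [hf] using hlt) (by positivity : 0 < η / 2)
  have hnorm : ‖ψ (m n) - f n‖ ≤ 5 := (norm_sub_le _ _).trans <| by
    have := hf4 n; push_cast at this; linarith [hψ1 (m n)]
  have htail := hR (m n) (ψ (m n) - f n) fun y hy => by
    simp [hf, G, cutoff_of_le (hRpos n) hy]
  rw [sub_apply] at htail
  nlinarith [hψμ (m n), hn _ (hμ (m n)), abs_sub_abs_le_abs_sub (ψ (m n) (μ (m n))) (f n (μ (m n)))]

theorem exists_finset (hV : IsVStarSet Γ) (hδ : IsLipschitzFree o δ) {θ : ℝ}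
    (hsep : ∀ x y : M, x ≠ y → θ ≤ dist x y) {η : ℝ} (hη : 0 < η) :
    ∃ A : Finset M, ∀ ψ : F →L[ℝ] ℝ, (∀ y, |ψ (δ y)| ≤ θ / 2) → (∀ y ∈ A, ψ (δ y) = 0) →
      ∀ μ ∈ Γ, |ψ μ| ≤ η := by
  classical
  by_contra! hcon
  choose ψ hψb hψ0 μ hμ hψμ using hcon
  choose D hD using fun A => hδ.exists_finset_abs_apply_le (μ A) (by positivity : 0 < η / 4)
  obtain ⟨B, hB⟩ : ∃ B : ℕ → Finset M, ∀ k, B (k + 1) = B k ∪ D (B k) :=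
    ⟨fun k => Nat.rec ∅ (fun _ A => A ∪ D A) k, fun _ => rfl⟩
  have hBmono : Monotone B :=
    monotone_nat_of_le_succ fun k => hB k ▸ Finset.subset_union_left
  let G : ℕ → M → ℝ := fun k y => if y ∈ D (B k) then ψ (B k) (δ y) else 0
  have hGb : ∀ k y, |G k y| ≤ θ / 2 := fun k y => by
    by_cases hy : y ∈ D (B k)
    · simpa [G, hy] using hψb (B k) y
    · simpa [G, hy] using (abs_nonneg _).trans (hψb (B k) y)
  have hsupp : ∀ k y, G k y ≠ 0 → y ∈ D (B k) ∧ y ∉ B k := fun k y hy => by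
    by_cases hyD : y ∈ D (B k)
    · exact ⟨hyD, fun hyB => hy (by simp [G, hψ0 _ y hyB])⟩
    · exact absurd (by simp [G, hyD]) hy
  have hG : ∀ k, LipschitzWith 1 (G k) := fun k => lipschitzWith_one_of_abs_le_half hsep (hGb k)
  choose f hf1 hf using fun k => hδ.lift 1 (G k) (hG k) (by simp [G, hδ.map_base])
  have hlt : ∀ i j, i < j → ∀ u v, G i u ≠ 0 → G j v ≠ 0 → |G i u| + |G j v| ≤ 1 * dist u v := by
    intro i j hij u v hu hv
    have huv : u ≠ v := by
      rintro rfl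
      refine (hsupp j u hv).2 (hBmono (Nat.succ_le_of_lt hij) ?_)
      exact hB i ▸ Finset.mem_union_right _ (hsupp i u hu).1
    linarith [hGb i u, hGb j v, hsep u v huv]
  obtain ⟨n, hn⟩ := hV.exists_abs_apply_le_of_separated hδ (f := f) (L := 1)
    (by simpa [hf] using hG) (by simpa [hf] using hlt) (by positivity : 0 < η / 2)
  have hψ1 : ‖ψ (B n)‖ ≤ 1 := by
    simpa using hδ.norm_le_of_lipschitzWith (lipschitzWith_one_of_abs_le_half hsep (hψb _))
  have hnorm : ‖ψ (B n) - f n‖ ≤ 2 := (norm_sub_le _ _).trans <| by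
    have := hf1 n; push_cast at this; linarith
  have htail := hD (B n) (ψ (B n) - f n) fun y hy => by simp [hf, G, hy]
  rw [sub_apply] at htail
  nlinarith [hψμ (B n), hn _ (hμ (B n)), abs_sub_abs_le_abs_sub (ψ (B n) (μ (B n))) (f n (μ (B n)))]

theorem exists_finset_approx (hV : IsVStarSet Γ) (hδ : IsLipschitzFree o δ)
    {θ : ℝ} (hθ : 0 < θ) (hsep : ∀ x y : M, x ≠ y → θ ≤ dist x y) {ε : ℝ} (hε : 0 < ε) :
    ∃ A : Finset M, ∀ μ ∈ Γ, ∃ ν ∈ Submodule.span ℝ (δ '' A), ‖μ - ν‖ ≤ ε := by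
  classical
  obtain ⟨r, hr, hrad⟩ := hV.exists_radius hδ (η := ε / 10) (by positivity)
  obtain ⟨A, hA⟩ := hV.exists_finset hδ hsep (η := ε * θ / (8 * r)) (by positivity)
  have hcoord : ∀ x : M, ∃ e : F →L[ℝ] ℝ, x ≠ o → ∀ y, e (δ y) = if y = x then 1 else 0 :=
    fun x => if hx : x = o then ⟨0, fun h => absurd hx h⟩
      else (hδ.exists_apply_eq_ite hθ hsep hx).imp fun _ he _ => he
  choose e he using hcoord
  refine ⟨A, fun μ hμ => ⟨∑ x ∈ A, (cutoff r (dist x o) * e x μ) • δ x,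
    Submodule.sum_mem _ fun x hx => Submodule.smul_mem _ _
      (Submodule.subset_span (Set.mem_image_of_mem δ hx)), ?_⟩⟩
  obtain ⟨φ, hφ1, hφ⟩ := exists_dual_vector'' ℝ (μ - ∑ x ∈ A, (cutoff r (dist x o) * e x μ) • δ x)
  obtain ⟨ψ₁, ψ₂, hdec, hψ₁, hψ₁0, hψ₂b, hψ₂0⟩ := hδ.exists_decomposition hr A he hφ1
  have h₁ : |ψ₁ μ| ≤ ε / 2 := by
    have := hrad ((5 : ℝ)⁻¹ • ψ₁) (by rw [norm_smul]; norm_num; linarith)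
      (fun y hy => by simp [hψ₁0 y hy]) μ hμ
    rw [smul_apply, smul_eq_mul, abs_mul] at this
    norm_num at this
    linarith
  have h₂ : |ψ₂ μ| ≤ ε / 2 := by
    have := hA ((θ / (4 * r)) • ψ₂) (fun y => by
        rw [smul_apply, smul_eq_mul, abs_mul, abs_of_pos (by positivity)]
        calc θ / (4 * r) * |ψ₂ (δ y)| ≤ θ / (4 * r) * (2 * r) := by gcongr; exact hψ₂b y
          _ = θ / 2 := by field_simp; ring)
      (fun y hy => by simp [hψ₂0 y hy]) μ hμ
    rw [smul_apply, smul_eq_mul, abs_mul, abs_of_pos (by positivity)] at this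
    calc |ψ₂ μ| = 4 * r / θ * (θ / (4 * r) * |ψ₂ μ|) := by field_simp
      _ ≤ 4 * r / θ * (ε * θ / (8 * r)) := by gcongr
      _ = ε / 2 := by field_simp; ring
  have hsplit : φ (μ - ∑ x ∈ A, (cutoff r (dist x o) * e x μ) • δ x) = ψ₁ μ + ψ₂ μ := by
    have hφμ := congrArg (fun ψ : F →L[ℝ] ℝ => ψ μ) hdec
    simp only [add_apply, sum_apply, smul_apply, smul_eq_mul] at hφμ
    simp only [map_sub, map_sum, map_smul, smul_eq_mul]
    rw [hφμ, Finset.sum_congr rfl fun x _ => mul_right_comm (cutoff r (dist x o)) (e x μ) _]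
    ring
  rw [hsplit, RCLike.ofReal_real_eq_id, id] at hφ
  linarith [le_abs_self (ψ₁ μ), le_abs_self (ψ₂ μ)]

theorem totallyBounded (hV : IsVStarSet Γ) (hδ : IsLipschitzFree o δ) {θ : ℝ} (hθ : 0 < θ)
    (hsep : ∀ x y : M, x ≠ y → θ ≤ dist x y) : TotallyBounded Γ :=
  totallyBounded_of_forall_exists_finiteDimensional hV.isBounded fun _ hε =>
    let ⟨A, hA⟩ := hV.exists_finset_approx hδ hθ hsep hε
    ⟨_, FiniteDimensional.span_of_finite ℝ (A.finite_toSet.image δ), hA⟩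

end IsVStarSet

/-- If `M` is a uniformly discrete pointed metric space, i.e.
`inf {d(x,y) : x ≠ y} > 0`, then the Lipschitz-free space `F(M)` has property (V*). -/
theorem propertyVStar_of_uniformlyDiscrete
    {M : Type*} [MetricSpace M]
    (hdisc : ∃ θ > (0 : ℝ), ∀ x y : M, x ≠ y → θ ≤ dist x y) (o : M)
    {F : Type*} [NormedAddCommGroup F] [NormedSpace ℝ F] [CompleteSpace F]
    (δ : M → F) (hδ : IsLipschitzFree o δ) :
    HasPropertyVStar F := by
  obtain ⟨θ, hθ, hsep⟩ := hdisc
  exact fun Γ hV => relWeaklyCompact_of_totallyBounded (hV.totallyBounded hδ hθ hsep)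
end
end

section
/- Suppose that for every n ∈ ℕ there exist a finite set F_n ⊂ ℓ₁ and a 1-Lipschitz map φ_n : F_n → ℓ₁ that admits no Lipschitz extension Φ_n : ℓ₁ → ℓ₁ with Lip(Φ_n) ≤ n. Then there exist a compact set K ⊂ ℓ₁ and a Lipschitz map φ : K → ℓ₁ that admits no Lipschitz extension Φ : ℓ₁ → ℓ₁. Consequently, the Lipschitz extension property for ℓ₁-valued maps from compact subsets fails in M = ℓ₁. -/
/-!
Rescale the `n`-th counterexample by a similarity into a tiny ball around `4⁻ⁿ e`, with
values of the same size. Since these balls are mutually far apart compared with their radii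
and with the sizes of the values, the glued map is `1`-Lipschitz on the union of the copies
together with their limit point `0`, which is compact. A `C`-Lipschitz extension of the glued
map would, after undoing the `⌈C⌉`-th similarity, be a `⌈C⌉`-Lipschitz extension of the
`⌈C⌉`-th counterexample.
-/

open Set Metric Filter Topology Function
open scoped NNReal

theorem isCompact_insert_iUnion_of_tendsto_smallSets {X : Type*} [TopologicalSpace X]
    {H : ℕ → Set X} {x : X} (hc : ∀ n, IsCompact (H n)) (hH : Tendsto H atTop (𝓝 x).smallSets) :
    IsCompact (insert x (⋃ n, H n)) := by
  intro l hne hle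
  by_cases hx : ClusterPt x l
  · exact ⟨x, mem_insert x _, hx⟩
  simp only [clusterPt_iff_nonempty, not_forall, ← not_disjoint_iff_nonempty_inter,
    not_not] at hx
  obtain ⟨U, hU, V, hV, hUV⟩ := hx
  obtain ⟨N, hN⟩ := eventually_atTop.1 (tendsto_smallSets_iff.1 hH U hU)
  have hl : ⋃ n < N, H n ∈ l := by
    filter_upwards [hV, le_principal_iff.1 hle] with y hyV hy
    rcases hy with rfl | hy
    · exact (hUV.le_bot ⟨mem_of_mem_nhds hU, hyV⟩).elim
    obtain ⟨n, hn⟩ := mem_iUnion.1 hy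
    refine mem_biUnion (not_le.1 fun hNn => hUV.le_bot ⟨hN n hNn hn, hyV⟩) hn
  obtain ⟨y, hy, hyl⟩ :=
    (finite_lt_nat N).isCompact_biUnion (fun n _ => hc n) (le_principal_iff.2 hl)
  exact ⟨y, mem_insert_of_mem _ (iUnion₂_subset_iUnion _ _ hy), hyl⟩

theorem exists_eqOn_of_pairwise_disjoint {ι α β : Type*} [Zero β] {S : ι → Set α}
    (hS : Pairwise (Disjoint on S)) (f : ι → α → β) :
    ∃ g : α → β, (∀ i, EqOn g (f i) (S i)) ∧ ∀ x ∉ ⋃ i, S i, g x = 0 := by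
  classical
  refine ⟨fun x => if h : ∃ i, x ∈ S i then f h.choose x else 0, fun i x hx => ?_,
    fun x hx => dif_neg fun h => hx (mem_iUnion.2 h)⟩
  have h : ∃ i, x ∈ S i := ⟨i, hx⟩
  simp only [dif_pos h]
  rw [hS.eq (not_disjoint_iff.2 ⟨x, h.choose_spec, hx⟩)]

section Gluing

variable {E F : Type*} [NormedAddCommGroup E] [NormedSpace ℝ E] [NormedAddCommGroup F]

theorem half_le_dist_of_mem_closedBall_smul {e : E} (he : ‖e‖ = 1) {s t : ℝ} (hs : 0 ≤ s)
    (hst : 4 * s ≤ t) {y z : E} (hy : y ∈ closedBall (t • e) (t / 8))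
    (hz : z ∈ closedBall (s • e) (s / 8)) : t / 2 ≤ dist y z := by
  have hts : dist (t • e) (s • e) = t - s := by
    rw [dist_eq_norm, ← sub_smul, norm_smul, he, mul_one, Real.norm_of_nonneg (by linarith)]
  have := dist_triangle4 (t • e) y z (s • e)
  rw [mem_closedBall, dist_comm] at hy
  rw [mem_closedBall] at hz
  linarith

theorem dist_le_dist_of_mem_closedBall_smul {e : E} (he : ‖e‖ = 1) {s t : ℝ} (hs : 0 ≤ s)
    (hst : 4 * s ≤ t) {g : E → F} {y z : E} (hy : y ∈ closedBall (t • e) (t / 8))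
    (hgy : ‖g y‖ ≤ t / 8) (hz : z ∈ closedBall (s • e) (s / 8)) (hgz : ‖g z‖ ≤ s / 8) :
    dist (g y) (g z) ≤ dist y z :=
  calc dist (g y) (g z) ≤ ‖g y‖ + ‖g z‖ := dist_le_norm_add_norm _ _
    _ ≤ t / 2 := by linarith
    _ ≤ dist y z := half_le_dist_of_mem_closedBall_smul he hs hst hy hz

theorem zero_notMem_iUnion_of_subset_closedBall_smul {e : E} (he : ‖e‖ = 1) {ρ : ℕ → ℝ}
    (hρ0 : ∀ n, 0 < ρ n) {H : ℕ → Set E} (hH : ∀ n, H n ⊆ closedBall (ρ n • e) (ρ n / 8)) :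
    (0 : E) ∉ ⋃ n, H n := fun h0 => by
  obtain ⟨n, hn⟩ := mem_iUnion.1 h0
  have := half_le_dist_of_mem_closedBall_smul he le_rfl (by simpa using (hρ0 n).le) (hH n hn)
    (by simp : (0 : E) ∈ closedBall ((0 : ℝ) • e) (0 / 8))
  linarith [hρ0 n, dist_self (0 : E)]

theorem pairwise_disjoint_of_subset_closedBall_smul {e : E} (he : ‖e‖ = 1) {ρ : ℕ → ℝ}
    (hρ0 : ∀ n, 0 < ρ n) (hρ : ∀ m n, m < n → 4 * ρ n ≤ ρ m) {H : ℕ → Set E}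
    (hH : ∀ n, H n ⊆ closedBall (ρ n • e) (ρ n / 8)) : Pairwise (Disjoint on H) :=
  (pairwise_disjoint_on H).2 fun m n hmn => disjoint_left.2 fun y hym hyn => by
    have := half_le_dist_of_mem_closedBall_smul he (hρ0 n).le (hρ m n hmn) (hH m hym) (hH n hyn)
    linarith [hρ0 m, dist_self y]

theorem isCompact_insert_zero_iUnion_of_subset_closedBall_smul {e : E} (he : ‖e‖ = 1)
    {ρ : ℕ → ℝ} (hρ : Tendsto ρ atTop (𝓝 0)) {H : ℕ → Set E} (hHc : ∀ n, IsCompact (H n))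
    (hH : ∀ n, H n ⊆ closedBall (ρ n • e) (ρ n / 8)) : IsCompact (insert 0 (⋃ n, H n)) := by
  have hρ' : Tendsto (fun n => ρ n / 8 + |ρ n|) atTop (𝓝 0) := by
    simpa using (hρ.div_const 8).add hρ.abs
  refine isCompact_insert_iUnion_of_tendsto_smallSets hHc <|
    ((tendsto_closedBall_smallSets 0).comp hρ').smallSets_mono <| .of_forall fun n =>
      (hH n).trans <| closedBall_subset_closedBall' <| le_of_eq ?_
  rw [dist_zero_right, norm_smul, he, mul_one, Real.norm_eq_abs]

theorem lipschitzOnWith_one_insert_zero_iUnion {e : E} (he : ‖e‖ = 1) {ρ : ℕ → ℝ}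
    (hρ0 : ∀ n, 0 ≤ ρ n) (hρ : ∀ m n, m < n → 4 * ρ n ≤ ρ m) {H : ℕ → Set E} {g : E → F}
    (hH : ∀ n, H n ⊆ closedBall (ρ n • e) (ρ n / 8)) (hg : ∀ n, ∀ y ∈ H n, ‖g y‖ ≤ ρ n / 8)
    (hlip : ∀ n, LipschitzOnWith 1 g (H n)) (hg0 : g 0 = 0) :
    LipschitzOnWith 1 g (insert 0 (⋃ n, H n)) := by
  -- `0` is a copy at scale `0`, so the estimate between distinct copies covers it too.
  have h0 : (0 : E) ∈ closedBall ((0 : ℝ) • e) (0 / 8) := by simp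
  have hg0' : ‖g 0‖ ≤ 0 / 8 := by simp [hg0]
  refine LipschitzOnWith.of_dist_le_mul fun y hy z hz => ?_
  rw [NNReal.coe_one, one_mul]
  rcases hy with rfl | hy <;> rcases hz with rfl | hz
  · simp
  · obtain ⟨n, hz⟩ := mem_iUnion.1 hz
    rw [dist_comm, dist_comm (0 : E)]
    exact dist_le_dist_of_mem_closedBall_smul he le_rfl (by simpa using hρ0 n) (hH n hz)
      (hg n z hz) h0 hg0'
  · obtain ⟨m, hy⟩ := mem_iUnion.1 hy
    exact dist_le_dist_of_mem_closedBall_smul he le_rfl (by simpa using hρ0 m) (hH m hy)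
      (hg m y hy) h0 hg0'
  · obtain ⟨m, hy⟩ := mem_iUnion.1 hy
    obtain ⟨n, hz⟩ := mem_iUnion.1 hz
    rcases lt_trichotomy m n with hmn | rfl | hnm
    · exact dist_le_dist_of_mem_closedBall_smul he (hρ0 n) (hρ m n hmn) (hH m hy) (hg m y hy)
        (hH n hz) (hg n z hz)
    · simpa using (hlip m).dist_le_mul y hy z hz
    · rw [dist_comm, dist_comm y]
      exact dist_le_dist_of_mem_closedBall_smul he (hρ0 m) (hρ n m hnm) (hH n hz) (hg n z hz)
        (hH m hy) (hg m y hy)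

end Gluing

section Rescaling

variable {α β F : Type*} [PseudoMetricSpace α] [PseudoMetricSpace β] [NormedAddCommGroup F]
  [NormedSpace ℝ F] {A : α → β} {c : ℝ} {K : ℝ≥0}

theorem lipschitzOnWith_image_of_dist_eq (hc : 0 ≤ c) (hA : ∀ x y, dist (A x) (A y) = c * dist x y)
    {S : Set α} {φ : α → F} {ψ : β → F} {w : F} (hψ : ∀ x ∈ S, ψ (A x) = c • (φ x - w))
    (hφ : LipschitzOnWith K φ S) : LipschitzOnWith K ψ (A '' S) := by
  refine LipschitzOnWith.of_dist_le_mul ?_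
  rintro _ ⟨x, hx, rfl⟩ _ ⟨y, hy, rfl⟩
  rw [hψ x hx, hψ y hy, dist_smul₀, dist_sub_right, hA, Real.norm_of_nonneg hc, mul_left_comm]
  exact mul_le_mul_of_nonneg_left (hφ.dist_le_mul x hx y hy) hc

theorem lipschitzWith_add_inv_smul_comp (hc : 0 < c) (hA : ∀ x y, dist (A x) (A y) = c * dist x y)
    {Φ : β → F} (hΦ : LipschitzWith K Φ) (w : F) :
    LipschitzWith K fun x => w + c⁻¹ • Φ (A x) := by
  refine LipschitzWith.of_dist_le_mul fun x y => ?_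
  rw [dist_add_left, dist_smul₀, Real.norm_of_nonneg (inv_nonneg.2 hc.le)]
  calc c⁻¹ * dist (Φ (A x)) (Φ (A y)) ≤ c⁻¹ * (K * (c * dist x y)) := by
        rw [← hA]; exact mul_le_mul_of_nonneg_left (hΦ.dist_le_mul _ _) (inv_nonneg.2 hc.le)
    _ = K * dist x y := by field_simp

end Rescaling

section Copies

variable {E F : Type*} [NormedAddCommGroup E] [NormedSpace ℝ E] [NormedAddCommGroup F]
  [NormedSpace ℝ F]

theorem exists_rescaled_copy {S : Set E} (hS : IsCompact S) {φ : E → F}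
    (hφ : LipschitzOnWith 1 φ S) (x₀ : E) {t : ℝ} (ht : 0 < t) :
    ∃ H : Set E, ∃ ψ : E → F, IsCompact H ∧ H ⊆ closedBall x₀ t ∧ (∀ y ∈ H, ‖ψ y‖ ≤ t) ∧
      LipschitzOnWith 1 ψ H ∧ ∀ (K : ℝ≥0) (Φ : E → F), LipschitzWith K Φ → EqOn Φ ψ H →
        ∃ Φ' : E → F, LipschitzWith K Φ' ∧ EqOn Φ' φ S := by
  rcases S.eq_empty_or_nonempty with rfl | ⟨p, hp⟩
  · exact ⟨∅, 0, isCompact_empty, empty_subset _, by simp, by simp,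
      fun K _ _ _ => ⟨0, LipschitzWith.const' 0, eqOn_empty _ _⟩⟩
  obtain ⟨d, hd, hSd⟩ := hS.isBounded.subset_closedBall_lt 0 p
  set c := t / d
  have hc : 0 < c := div_pos ht hd
  set A : E → E := fun x => c • (x - p) + x₀
  have hA : ∀ x y, dist (A x) (A y) = c * dist x y := fun x y => by
    rw [dist_add_right, dist_smul₀, dist_sub_right, Real.norm_of_nonneg hc.le]
  have hAp : A p = x₀ := by simp [A]
  set ψ : E → F := fun y => c • (φ (c⁻¹ • (y - x₀) + p) - φ p)
  have hψA : ∀ x, ψ (A x) = c • (φ x - φ p) := fun x => by simp [ψ, A, hc.ne']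
  have hcd : ∀ x ∈ S, c * dist x p ≤ t := fun x hx => by
    calc c * dist x p ≤ c * d := mul_le_mul_of_nonneg_left (hSd hx) hc.le
      _ = t := div_mul_cancel₀ t hd.ne'
  refine ⟨A '' S, ψ, hS.image (by fun_prop), ?_, ?_, ?_, fun K Φ hΦ hΦψ => ?_⟩
  · rintro _ ⟨x, hx, rfl⟩
    rw [mem_closedBall, ← hAp, hA]
    exact hcd x hx
  · rintro _ ⟨x, hx, rfl⟩
    rw [hψA, norm_smul, Real.norm_of_nonneg hc.le, ← dist_eq_norm]
    exact (mul_le_mul_of_nonneg_left (by simpa using hφ.dist_le_mul x hx p hp) hc.le).trans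
      (hcd x hx)
  · exact lipschitzOnWith_image_of_dist_eq hc.le hA (fun x _ => hψA x) hφ
  · refine ⟨fun x => φ p + c⁻¹ • Φ (A x), lipschitzWith_add_inv_smul_comp hc hA hΦ _,
      fun x hx => ?_⟩
    simp only [hΦψ (mem_image_of_mem A hx), hψA, inv_smul_smul₀ hc.ne', add_sub_cancel]

end Copies

theorem exists_isCompact_lipschitzOnWith_not_extendable {E F : Type*} [NormedAddCommGroup E]
    [NormedSpace ℝ E] [Nontrivial E] [NormedAddCommGroup F] [NormedSpace ℝ F]
    (h : ∀ n : ℕ, ∃ S : Set E, IsCompact S ∧ ∃ φ : E → F, LipschitzOnWith 1 φ S ∧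
      ¬ ∃ Φ : E → F, LipschitzWith (n : ℝ≥0) Φ ∧ EqOn Φ φ S) :
    ∃ K : Set E, IsCompact K ∧ ∃ φ : E → F, (∃ C : ℝ≥0, LipschitzOnWith C φ K) ∧
      ¬ ∃ Φ : E → F, (∃ C : ℝ≥0, LipschitzWith C Φ) ∧ ∀ x ∈ K, Φ x = φ x := by
  obtain ⟨e, he⟩ := exists_norm_eq E zero_le_one
  set ρ : ℕ → ℝ := fun n => 4⁻¹ ^ n
  have hρ0 : ∀ n, 0 < ρ n := fun n => by positivity
  have hρ : ∀ m n, m < n → 4 * ρ n ≤ ρ m := fun m n hmn => by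
    calc 4 * ρ n ≤ 4 * ρ (m + 1) := by
          gcongr; exact pow_le_pow_of_le_one (by norm_num) (by norm_num) hmn
      _ = ρ m := by simp [ρ, pow_succ]
  have hρ_lim : Tendsto ρ atTop (𝓝 0) :=
    tendsto_pow_atTop_nhds_zero_of_lt_one (by norm_num) (by norm_num)
  choose S hS φ hφ hno using h
  choose H ψ hHc hH hψ hψlip hlift using
    fun n => exists_rescaled_copy (hS n) (hφ n) (ρ n • e) (t := ρ n / 8) (by positivity)
  obtain ⟨g, hgψ, hg0⟩ :=
    exists_eqOn_of_pairwise_disjoint (pairwise_disjoint_of_subset_closedBall_smul he hρ0 hρ hH) ψ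
  refine ⟨insert 0 (⋃ n, H n), isCompact_insert_zero_iUnion_of_subset_closedBall_smul he hρ_lim
    hHc hH, g, ⟨1, lipschitzOnWith_one_insert_zero_iUnion he (fun n => (hρ0 n).le) hρ hH
      (fun n y hy => hgψ n hy ▸ hψ n y hy)
      (fun n x hx y hy => by rw [hgψ n hx, hgψ n hy]; exact hψlip n hx hy)
      (hg0 0 (zero_notMem_iUnion_of_subset_closedBall_smul he hρ0 hH))⟩, ?_⟩
  rintro ⟨Φ, ⟨C, hΦ⟩, hΦg⟩
  obtain ⟨Φ', hΦ', hΦ'φ⟩ := hlift ⌈C⌉₊ ⌈C⌉₊ Φ (hΦ.weaken (Nat.le_ceil C))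
    fun y hy => (hΦg y (mem_insert_of_mem _ (mem_iUnion_of_mem _ hy))).trans (hgψ _ hy)
  exact hno _ ⟨Φ', hΦ', hΦ'φ⟩

/-- Suppose that for every `n ∈ ℕ` there are a finite set `Fₙ ⊆ ℓ₁` and a 1-Lipschitz
map `φₙ : Fₙ → ℓ₁` admitting no Lipschitz extension `Φₙ : ℓ₁ → ℓ₁` with `Lip(Φₙ) ≤ n`.
Then there are a compact set `K ⊆ ℓ₁` and a Lipschitz map `φ : K → ℓ₁` admitting no
Lipschitz extension `Φ : ℓ₁ → ℓ₁`; consequently, the Lipschitz extension property for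
`ℓ₁`-valued maps from compact subsets fails in `M = ℓ₁`. -/
theorem ellOne_no_lipschitz_extension_from_compact
    (h : ∀ n : ℕ, ∃ Fn : Set ellOne, Fn.Finite ∧
      ∃ φ : ellOne → ellOne, LipschitzOnWith 1 φ Fn ∧
        ¬ ∃ Φ : ellOne → ellOne, LipschitzWith (n : NNReal) Φ ∧ ∀ x ∈ Fn, Φ x = φ x) :
    ∃ K : Set ellOne, IsCompact K ∧
      ∃ φ : ellOne → ellOne, (∃ C : NNReal, LipschitzOnWith C φ K) ∧
        ¬ ∃ Φ : ellOne → ellOne, (∃ C : NNReal, LipschitzWith C Φ) ∧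
          ∀ x ∈ K, Φ x = φ x := by
  have : Nontrivial ellOne := nontrivial_of_ne (lp.single 1 0 1) 0 <|
    ne_zero_of_norm_ne_zero <| by rw [lp.norm_single zero_lt_one]; norm_num
  refine exists_isCompact_lipschitzOnWith_not_extendable fun n => ?_
  obtain ⟨S, hS, φ, hφ, hno⟩ := h n
  exact ⟨S, hS.isCompact, φ, hφ, hno⟩
end
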